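/- arXiv:2501.19050 — 11 statements merged into one kernel-verified Lean document; each statement's English description precedes it below -/
import Mathlib

section
/- For any square matrix Q ∈ ℝ^{r×r}, there exists a diagonal matrix P with diagonal entries in {-1, 1} such that I + P Qᵀ is invertible. -/
open Matrix

/-- For any square real matrix `Q`, there is a diagonal matrix `P` with diagonal entries
in `{-1, 1}` such that `I + P * Qᵀ` is invertible. -/
theorem stmt_0 (r : ℕ) (Q : Matrix (Fin r) (Fin r) ℝ) :
    ∃ p : Fin r → ℝ, (∀ j, p j = -1 ∨ p j = 1) ∧
      IsUnit (1 + Matrix.diagonal p * Qᵀ) := by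
  classical
  set A : Matrix (Fin r) (Fin r) ℝ := Qᵀ with hA
  set e : Fin r → Fin r → ℝ := fun i => (1 : Matrix (Fin r) (Fin r) ℝ) i with he
  set f := (Matrix.detRowAlternating (n := Fin r) (R := ℝ)).toMultilinearMap with hf
  -- expansion of the determinant
  have hdet : ∀ p : Fin r → ℝ, (1 + diagonal p * A).det
      = ∑ s : Finset (Fin r), (∏ i ∈ s, p i) * f (s.piecewise A e) := by
    intro p
    have h1 : (1 + diagonal p * A) = ((fun i => p i • A i) + e) := by
      ext i j
      simp [e, Matrix.mul_apply, Matrix.diagonal_apply, Matrix.one_apply, ite_mul,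
        Finset.sum_ite_eq, Pi.add_apply]
      ring
    have h2 : (1 + diagonal p * A).det = f ((fun i => p i • A i) + e) := by
      rw [h1]; rfl
    rw [h2, f.map_add_univ]
    refine Finset.sum_congr rfl fun s _ => ?_
    have key : f (s.piecewise (fun i => p i • A i) e)
        = (∏ i ∈ s, p i) • f (s.piecewise A e) := by
      have hc : s.piecewise (fun i => p i • A i) e
          = s.piecewise (fun i => (if i ∈ s then p i else 1) • (s.piecewise A e) i)
              (s.piecewise A e) := by
        ext i j
        by_cases hi : i ∈ s <;> simp [Finset.piecewise, hi]
      rw [hc, f.map_piecewise_smul]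
      congr 1
      exact Finset.prod_congr rfl fun i hi => by simp [hi]
    rw [key, smul_eq_mul]
  -- sum over all sign vectors
  set T : Finset (Fin r → ℝ) := Fintype.piFinset fun _ => ({-1, 1} : Finset ℝ) with hT
  have hsum : ∑ p ∈ T, (1 + diagonal p * A).det = (2 : ℝ) ^ r := by
    have hcoef : ∀ s : Finset (Fin r),
        ∑ p ∈ T, ∏ i ∈ s, p i = if s = ∅ then (2 : ℝ) ^ r else 0 := by
      intro s
      have h1 : ∀ p : Fin r → ℝ, ∏ i ∈ s, p i
          = ∏ i : Fin r, (if i ∈ s then p i else 1) := by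
        intro p
        rw [Finset.prod_ite_mem, Finset.univ_inter]
      calc ∑ p ∈ T, ∏ i ∈ s, p i
          = ∑ p ∈ T, ∏ i : Fin r, (if i ∈ s then p i else 1) := by
            exact Finset.sum_congr rfl fun p _ => h1 p
        _ = ∏ i : Fin r, ∑ x ∈ ({-1, 1} : Finset ℝ), (if i ∈ s then x else 1) := by
            rw [Finset.prod_univ_sum]
        _ = ∏ i : Fin r, (if i ∈ s then (0 : ℝ) else 2) := by
            refine Finset.prod_congr rfl fun i _ => ?_
            by_cases hi : i ∈ s <;> simp [hi] <;> norm_num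
        _ = if s = ∅ then (2 : ℝ) ^ r else 0 := by
            by_cases hs : s = ∅
            · simp [hs]
            · obtain ⟨i, hi⟩ := Finset.nonempty_iff_ne_empty.2 hs
              rw [if_neg hs]
              exact Finset.prod_eq_zero (Finset.mem_univ i) (by simp [hi])
    calc ∑ p ∈ T, (1 + diagonal p * A).det
        = ∑ p ∈ T, ∑ s : Finset (Fin r), (∏ i ∈ s, p i) * f (s.piecewise A e) := by
          exact Finset.sum_congr rfl fun p _ => hdet p
      _ = ∑ s : Finset (Fin r), (∑ p ∈ T, ∏ i ∈ s, p i) * f (s.piecewise A e) := by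
          rw [Finset.sum_comm]
          exact Finset.sum_congr rfl fun s _ => by rw [Finset.sum_mul]
      _ = (2 : ℝ) ^ r := by
          rw [Finset.sum_eq_single (∅ : Finset (Fin r))]
          · have : f ((∅ : Finset (Fin r)).piecewise A e) = (1 : Matrix (Fin r) (Fin r) ℝ).det := by
              congr 1
            rw [hcoef, if_pos rfl, this, Matrix.det_one, mul_one]
          · intro s _ hs
            rw [hcoef, if_neg hs, zero_mul]
          · intro h; exact absurd (Finset.mem_univ _) h
  have h2r : (2 : ℝ) ^ r ≠ 0 := by positivity
  obtain ⟨p, hpT, hpne⟩ := Finset.exists_ne_zero_of_sum_ne_zero (hsum ▸ h2r)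
  refine ⟨p, fun j => ?_, ?_⟩
  · have := Fintype.mem_piFinset.mp hpT j
    simpa using this
  · rw [Matrix.isUnit_iff_isUnit_det]
    exact isUnit_iff_ne_zero.mpr hpne
end

section
/- The rectangular Cayley transformation produces a semi-orthogonal matrix: if G = Cayley(F) = [(I-Z)(I+Z)^{-1}; -2Y(I+Z)^{-1}] with Z = X - Xᵀ + Yᵀ Y, then Gᵀ G = I_r. -/
open Matrix

/-- The rectangular Cayley transformation produces a semi-orthogonal matrix:
with `Z = X - Xᵀ + Yᵀ Y`, `U = (I - Z)(I + Z)⁻¹`, `V = -2 Y (I + Z)⁻¹`, the stacked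
matrix `G = [U; V]` satisfies `Gᵀ G = Uᵀ U + Vᵀ V = I`. -/
theorem stmt_2 (r s : ℕ) (X : Matrix (Fin r) (Fin r) ℝ) (Y : Matrix (Fin s) (Fin r) ℝ)
    (Z : Matrix (Fin r) (Fin r) ℝ) (hZ : Z = X - Xᵀ + Yᵀ * Y)
    (hinv : IsUnit (1 + Z))
    (U : Matrix (Fin r) (Fin r) ℝ) (hU : U = (1 - Z) * (1 + Z)⁻¹)
    (V : Matrix (Fin s) (Fin r) ℝ) (hV : V = (-2 : ℝ) • (Y * (1 + Z)⁻¹)) :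
    Uᵀ * U + Vᵀ * V = 1 := by
  have hsym : Z + Zᵀ = (2 : ℝ) • (Yᵀ * Y) := by
    subst hZ
    simp only [transpose_add, transpose_sub, transpose_mul, transpose_transpose]
    module
  have key : (1 - Z)ᵀ * (1 - Z) + (4 : ℝ) • (Yᵀ * Y) = (1 + Z)ᵀ * (1 + Z) := by
    have h4 : (4 : ℝ) • (Yᵀ * Y) = (2 : ℝ) • (Z + Zᵀ) := by rw [hsym]; module
    rw [h4]
    simp only [transpose_sub, transpose_add, transpose_one]
    noncomm_ring
    module
  have hA : (1 + Z) * (1 + Z)⁻¹ = 1 := mul_nonsing_inv _ (isUnit_iff_isUnit_det _ |>.mp hinv)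
  rw [hU, hV]
  calc ((1 - Z) * (1 + Z)⁻¹)ᵀ * ((1 - Z) * (1 + Z)⁻¹) +
        ((-2 : ℝ) • (Y * (1 + Z)⁻¹))ᵀ * ((-2 : ℝ) • (Y * (1 + Z)⁻¹))
      = ((1 + Z)⁻¹)ᵀ * ((1 - Z)ᵀ * (1 - Z) + (4 : ℝ) • (Yᵀ * Y)) * (1 + Z)⁻¹ := by
        rw [mul_add, add_mul]
        congr 1
        · simp only [transpose_mul]; noncomm_ring
        · simp only [transpose_smul, transpose_mul, smul_mul_assoc, mul_smul_comm,
            smul_smul, mul_assoc]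
          norm_num
          rw [smul_smul]
          norm_num
          simp only [Matrix.mul_assoc]
    _ = ((1 + Z) * (1 + Z)⁻¹)ᵀ * ((1 + Z) * (1 + Z)⁻¹) := by
        rw [key]; simp only [transpose_mul]; noncomm_ring
    _ = 1 := by rw [hA]; simp
end

section
/- Let G ∈ ℝ^{(r+s)×r} be semi-orthogonal (Gᵀ G = I_r) with block partition G = [U; V], U ∈ ℝ^{r×r}, V ∈ ℝ^{s×r}. If I + U is invertible, then setting Z = (I+U)^{-1}(I-U), X = Z/2, Y = -V(I+Z)/2, we have Z = X - Xᵀ + Yᵀ Y, U = (I-Z)(I+Z)^{-1}, and V = -2Y(I+Z)^{-1}; i.e., G = Cayley([X; Y]). -/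
open Matrix

/-- Inverse of the Cayley transformation: if `G = [U; V]` is semi-orthogonal and `I + U`
is invertible, then with `Z = (I+U)⁻¹(I-U)`, `X = Z/2`, `Y = -V(I+Z)/2`, we have
`Z = X - Xᵀ + Yᵀ Y`, `U = (I-Z)(I+Z)⁻¹` and `V = -2Y(I+Z)⁻¹`, i.e. `G = Cayley([X; Y])`. -/
theorem stmt_3 (r s : ℕ) (U : Matrix (Fin r) (Fin r) ℝ) (V : Matrix (Fin s) (Fin r) ℝ)
    (horth : Uᵀ * U + Vᵀ * V = 1) (hinv : IsUnit (1 + U))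
    (Z : Matrix (Fin r) (Fin r) ℝ) (hZ : Z = (1 + U)⁻¹ * (1 - U))
    (X : Matrix (Fin r) (Fin r) ℝ) (hX : X = (1 / 2 : ℝ) • Z)
    (Y : Matrix (Fin s) (Fin r) ℝ) (hY : Y = (-(1 / 2) : ℝ) • (V * (1 + Z))) :
    Z = X - Xᵀ + Yᵀ * Y ∧ U = (1 - Z) * (1 + Z)⁻¹ ∧ V = (-2 : ℝ) • (Y * (1 + Z)⁻¹) := by
  have hdet : IsUnit (1 + U).det := (Matrix.isUnit_iff_isUnit_det _).mp hinv
  have hAA : (1 + U) * (1 + U)⁻¹ = 1 := Matrix.mul_nonsing_inv _ hdet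
  have hAA' : (1 + U)⁻¹ * (1 + U) = 1 := Matrix.nonsing_inv_mul _ hdet
  have h2 : (1 + U) * (1 + Z) = (2 : ℝ) • 1 := by
    rw [hZ, mul_add, mul_one, ← mul_assoc, hAA, one_mul, two_smul]
    abel
  have h1Z : 1 + Z = (2 : ℝ) • (1 + U)⁻¹ := by
    calc 1 + Z = (1 + U)⁻¹ * ((1 + U) * (1 + Z)) := by rw [← mul_assoc, hAA', one_mul]
    _ = (2 : ℝ) • (1 + U)⁻¹ := by rw [h2, mul_smul_comm, mul_one]
  have h2' : (1 + Z) * (1 + U) = (2 : ℝ) • 1 := by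
    rw [h1Z, smul_mul_assoc, hAA']
  have hinv1Z : (1 + Z)⁻¹ = (1 / 2 : ℝ) • (1 + U) :=
    Matrix.inv_eq_right_inv (by rw [mul_smul_comm, h2', smul_smul]; norm_num)
  have hmul_inv : (1 + Z) * (1 + Z)⁻¹ = 1 := by
    rw [hinv1Z, mul_smul_comm, h2', smul_smul]; norm_num
  have hcomm : U * (1 + U)⁻¹ = (1 + U)⁻¹ * U := by
    calc U * (1 + U)⁻¹ = ((1 + U)⁻¹ * (1 + U)) * (U * (1 + U)⁻¹) := by rw [hAA', one_mul]
    _ = (1 + U)⁻¹ * (((1 + U) * U) * (1 + U)⁻¹) := by noncomm_ring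
    _ = (1 + U)⁻¹ * ((U * (1 + U)) * (1 + U)⁻¹) := by noncomm_ring
    _ = (1 + U)⁻¹ * (U * ((1 + U) * (1 + U)⁻¹)) := by noncomm_ring
    _ = (1 + U)⁻¹ * U := by rw [hAA, mul_one]
  have hsub : (1 : Matrix (Fin r) (Fin r) ℝ) - Z = (2 : ℝ) • ((1 + U)⁻¹ * U) := by
    rw [hZ]
    calc (1 : Matrix (Fin r) (Fin r) ℝ) - (1 + U)⁻¹ * (1 - U)
        = (1 + U)⁻¹ * (1 + U) - (1 + U)⁻¹ * (1 - U) := by rw [hAA']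
    _ = (1 + U)⁻¹ * ((1 + U) - (1 - U)) := by noncomm_ring
    _ = (1 + U)⁻¹ * ((2 : ℝ) • U) := by rw [two_smul]; congr 1; abel
    _ = (2 : ℝ) • ((1 + U)⁻¹ * U) := by rw [mul_smul_comm]
  have hU1Z : U * (1 + Z) = 1 - Z := by
    rw [h1Z, mul_smul_comm, hcomm, ← hsub]
  have part2 : U = (1 - Z) * (1 + Z)⁻¹ := by
    rw [← hU1Z, mul_assoc, hmul_inv, mul_one]
  have hVtV : Vᵀ * V = 1 - Uᵀ * U := by
    rw [← horth]; abel
  have hkey : (1 + Z)ᵀ * (Vᵀ * V) * (1 + Z) = (2 : ℝ) • Z + (2 : ℝ) • Zᵀ := by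
    rw [hVtV]
    have h1 : (1 + Z)ᵀ * (Uᵀ * U) * (1 + Z) = (1 - Z)ᵀ * (1 - Z) := by
      have h := congrArg (fun M => Mᵀ * M) hU1Z
      simp only [transpose_mul] at h
      calc (1 + Z)ᵀ * (Uᵀ * U) * (1 + Z)
          = ((1 + Z)ᵀ * Uᵀ) * (U * (1 + Z)) := by noncomm_ring
      _ = (1 - Z)ᵀ * (1 - Z) := h
    rw [mul_sub, sub_mul, mul_one, h1]
    simp only [transpose_add, transpose_sub, transpose_one, two_smul]
    noncomm_ring
  have hYtY : Yᵀ * Y = (1 / 4 : ℝ) • ((1 + Z)ᵀ * (Vᵀ * V) * (1 + Z)) := by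
    rw [hY, transpose_smul, transpose_mul, Matrix.smul_mul, Matrix.mul_smul, smul_smul,
      show (-(1 / 2 : ℝ)) * (-(1 / 2 : ℝ)) = 1 / 4 by norm_num]
    congr 1
    rw [Matrix.mul_assoc, Matrix.mul_assoc, Matrix.mul_assoc]
  refine ⟨?_, part2, ?_⟩
  · rw [hYtY, hkey, hX, transpose_smul]
    module
  · rw [hY, Matrix.smul_mul, smul_smul, Matrix.mul_assoc, hmul_inv, Matrix.mul_one]
    norm_num
end

section
/- Let G ∈ ℝ^{(r+s)×r} be semi-orthogonal with partition G = [U; V], U ∈ ℝ^{r×r}. If G = Cayley(F) for some F, then I + U is invertible. -/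
open Matrix

/-- If the semi-orthogonal matrix `G = [U; V]` is in the range of the rectangular Cayley
transformation, then `I + U` is invertible. -/
theorem stmt_4 (r s : ℕ) (U : Matrix (Fin r) (Fin r) ℝ) (V : Matrix (Fin s) (Fin r) ℝ)
    (horth : Uᵀ * U + Vᵀ * V = 1)
    (hCayley : ∃ (X : Matrix (Fin r) (Fin r) ℝ) (Y : Matrix (Fin s) (Fin r) ℝ),
      U = (1 - (X - Xᵀ + Yᵀ * Y)) * (1 + (X - Xᵀ + Yᵀ * Y))⁻¹ ∧
      V = (-2 : ℝ) • (Y * (1 + (X - Xᵀ + Yᵀ * Y))⁻¹)) :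
    IsUnit (1 + U) := by
  obtain ⟨X, Y, hU, hV⟩ := hCayley
  set Z : Matrix (Fin r) (Fin r) ℝ := X - Xᵀ + Yᵀ * Y with hZ
  by_cases h : IsUnit (1 + Z)
  · have hdet : IsUnit (1 + Z).det := (Matrix.isUnit_iff_isUnit_det _).mp h
    have key : 1 + U = (2 : ℝ) • (1 + Z)⁻¹ := by
      rw [hU]
      nth_rewrite 1 [← Matrix.mul_nonsing_inv (1 + Z) hdet]
      rw [← add_mul]
      have h2 : (1 + Z) + (1 - Z) = 2 := by
        rw [add_add_sub_cancel, one_add_one_eq_two]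
      rw [h2, two_mul, ← two_smul ℝ ((1 + Z)⁻¹)]
    rw [key, Matrix.isUnit_iff_isUnit_det, Matrix.det_smul]
    exact ((by norm_num : IsUnit (2:ℝ)).pow (Fintype.card (Fin r))).mul
      ((Matrix.isUnit_iff_isUnit_det _).mp ((Matrix.isUnit_nonsing_inv_iff).mpr h))
  · have hinv : (1 + Z)⁻¹ = 0 := Matrix.nonsing_inv_apply_not_isUnit _
      (fun hd => h ((Matrix.isUnit_iff_isUnit_det _).mpr hd))
    rw [hinv, mul_zero] at hU
    rcases Nat.eq_zero_or_pos r with hr | hr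
    · subst hr
      have : (1 + U) = 1 := Subsingleton.elim _ _
      rw [this]; exact isUnit_one
    · exfalso
      rw [hinv] at hV
      simp only [Matrix.mul_zero, smul_zero] at hV
      rw [hU, hV] at horth
      simp only [Matrix.transpose_zero, Matrix.mul_zero, add_zero, Matrix.zero_mul] at horth
      haveI : Nonempty (Fin r) := ⟨⟨0, hr⟩⟩
      exact zero_ne_one horth
end

section
/- For any semi-orthogonal G = [U; V] ∈ ℝ^{(r+s)×r} (Gᵀ G = I_r) with U ∈ ℝ^{r×r}, there exists a diagonal matrix P with entries ±1 such that the block matrix [UP; VP] satisfies that I + UP is invertible; consequently, GP is in the range of the rectangular Cayley transformation. -/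
open Matrix

lemma col_update (r : ℕ) (U : Matrix (Fin r) (Fin r) ℝ) (p : Fin r → ℝ) (j : Fin r) (a : ℝ) :
    (1 : Matrix (Fin r) (Fin r) ℝ) + U * Matrix.diagonal (Function.update p j a)
      = Matrix.updateCol (1 + U * Matrix.diagonal p) j
          (fun i => (1 : Matrix (Fin r) (Fin r) ℝ) i j + a * U i j) := by
  ext i k
  by_cases h : k = j
  · subst h
    simp [Matrix.updateCol_apply, Matrix.add_apply, Matrix.mul_diagonal, mul_comm]
  · simp [Matrix.updateCol_apply, h, Matrix.add_apply, Matrix.mul_diagonal,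
      Function.update_of_ne h]

lemma avg_det (r : ℕ) (U : Matrix (Fin r) (Fin r) ℝ) (p : Fin r → ℝ) (j : Fin r) :
    ((1 : Matrix (Fin r) (Fin r) ℝ) + U * Matrix.diagonal (Function.update p j 1)).det
      + ((1 : Matrix (Fin r) (Fin r) ℝ) + U * Matrix.diagonal (Function.update p j (-1))).det
    = 2 * ((1 : Matrix (Fin r) (Fin r) ℝ) + U * Matrix.diagonal (Function.update p j 0)).det := by
  rw [col_update, col_update, col_update]
  set B := (1 : Matrix (Fin r) (Fin r) ℝ) + U * Matrix.diagonal p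
  have h1 : (fun i => (1 : Matrix (Fin r) (Fin r) ℝ) i j + 1 * U i j)
      = (fun i => (1 : Matrix (Fin r) (Fin r) ℝ) i j) + (fun i => U i j) := by
    funext i; simp
  have h2 : (fun i => (1 : Matrix (Fin r) (Fin r) ℝ) i j + (-1) * U i j)
      = (fun i => (1 : Matrix (Fin r) (Fin r) ℝ) i j) + (-1 : ℝ) • (fun i => U i j) := by
    funext i; simp [neg_one_smul]
  have h3 : (fun i => (1 : Matrix (Fin r) (Fin r) ℝ) i j + 0 * U i j)
      = (fun i => (1 : Matrix (Fin r) (Fin r) ℝ) i j) := by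
    funext i; simp
  rw [h1, h2, h3, Matrix.det_updateCol_add, Matrix.det_updateCol_add,
    Matrix.det_updateCol_smul]
  ring

lemma exists_sign (r : ℕ) (U : Matrix (Fin r) (Fin r) ℝ) :
    ∃ p : Fin r → ℝ, (∀ j, p j = -1 ∨ p j = 1) ∧
      ((1 : Matrix (Fin r) (Fin r) ℝ) + U * Matrix.diagonal p).det ≠ 0 := by
  by_contra hcon
  push_neg at hcon
  have key : ∀ S : Finset (Fin r), ∀ p : Fin r → ℝ,
      (∀ j ∉ S, p j = -1 ∨ p j = 1) → (∀ j ∈ S, p j = 0) →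
      ((1 : Matrix (Fin r) (Fin r) ℝ) + U * Matrix.diagonal p).det = 0 := by
    intro S
    refine Finset.induction_on S
      (fun p hp _ => hcon p (fun j => hp j (Finset.notMem_empty j))) ?_
    intro a S ha IH p hp hz
    have hpa : p = Function.update p a 0 := by
      funext j
      by_cases hj : j = a
      · subst hj; simp [hz j (Finset.mem_insert_self j S)]
      · simp [Function.update_of_ne hj]
    have h1 : ((1 : Matrix (Fin r) (Fin r) ℝ)
        + U * Matrix.diagonal (Function.update p a 1)).det = 0 := by
      apply IH
      · intro j hj
        by_cases hja : j = a
        · subst hja; simp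
        · rw [Function.update_of_ne hja]
          exact hp j (by simp [hja, hj])
      · intro j hj
        have hja : j ≠ a := fun h => ha (h ▸ hj)
        rw [Function.update_of_ne hja]
        exact hz j (Finset.mem_insert_of_mem hj)
    have h2 : ((1 : Matrix (Fin r) (Fin r) ℝ)
        + U * Matrix.diagonal (Function.update p a (-1))).det = 0 := by
      apply IH
      · intro j hj
        by_cases hja : j = a
        · subst hja; simp
        · rw [Function.update_of_ne hja]
          exact hp j (by simp [hja, hj])
      · intro j hj
        have hja : j ≠ a := fun h => ha (h ▸ hj)
        rw [Function.update_of_ne hja]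
        exact hz j (Finset.mem_insert_of_mem hj)
    have := avg_det r U p a
    rw [h1, h2] at this
    rw [hpa]
    linarith
  have h0 := key Finset.univ (fun _ => 0) (fun j hj => absurd (Finset.mem_univ j) hj)
    (fun _ _ => rfl)
  simp at h0

lemma cayley_inv {r s : ℕ} (W : Matrix (Fin r) (Fin r) ℝ) (V' : Matrix (Fin s) (Fin r) ℝ)
    (horth : Wᵀ * W + V'ᵀ * V' = 1)
    (hunit : IsUnit ((1 : Matrix (Fin r) (Fin r) ℝ) + W)) :
    ∃ (X : Matrix (Fin r) (Fin r) ℝ) (Y : Matrix (Fin s) (Fin r) ℝ),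
      W = (1 - (X - Xᵀ + Yᵀ * Y)) * (1 + (X - Xᵀ + Yᵀ * Y))⁻¹ ∧
      V' = (-2 : ℝ) • (Y * (1 + (X - Xᵀ + Yᵀ * Y))⁻¹) := by
  set M : Matrix (Fin r) (Fin r) ℝ := 1 + W with hMdef
  have hd : IsUnit M.det := (Matrix.isUnit_iff_isUnit_det M).mp hunit
  have hMl : M⁻¹ * M = 1 := Matrix.nonsing_inv_mul M hd
  have hMr : M * M⁻¹ = 1 := Matrix.mul_nonsing_inv M hd
  have hNl : (Mᵀ)⁻¹ * Mᵀ = 1 := by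
    rw [← Matrix.transpose_nonsing_inv, ← Matrix.transpose_mul, hMr, Matrix.transpose_one]
  set Y : Matrix (Fin s) (Fin r) ℝ := -(V' * M⁻¹) with hYdef
  set Z : Matrix (Fin r) (Fin r) ℝ := (1 - W) * M⁻¹ with hZdef
  set X : Matrix (Fin r) (Fin r) ℝ := (2 : ℝ)⁻¹ • (Z - Yᵀ * Y) with hXdef
  -- V'ᵀ V' = 1 - Wᵀ W
  have hVV : V'ᵀ * V' = 1 - Wᵀ * W := eq_sub_of_add_eq' horth
  -- YᵀY
  have hYY : Yᵀ * Y = (Mᵀ)⁻¹ * ((1 - Wᵀ * W) * M⁻¹) := by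
    rw [hYdef, Matrix.transpose_neg, Matrix.transpose_mul, Matrix.neg_mul, Matrix.mul_neg,
      neg_neg, Matrix.transpose_nonsing_inv, ← hVV]
    rw [Matrix.mul_assoc, Matrix.mul_assoc]
  -- Zᵀ
  have hZt : Zᵀ = (Mᵀ)⁻¹ * (1 - Wᵀ) := by
    rw [hZdef, Matrix.transpose_mul, Matrix.transpose_nonsing_inv, Matrix.transpose_sub,
      Matrix.transpose_one]
  -- key identity Z + Zᵀ = YᵀY + YᵀY
  have hkey : Z + Zᵀ = Yᵀ * Y + Yᵀ * Y := by
    have e1 : Z = (Mᵀ)⁻¹ * ((Mᵀ * (1 - W)) * M⁻¹) := by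
      rw [← Matrix.mul_assoc, ← Matrix.mul_assoc, hNl, Matrix.one_mul, hZdef]
    have e2 : Zᵀ = (Mᵀ)⁻¹ * (((1 - Wᵀ) * M) * M⁻¹) := by
      rw [Matrix.mul_assoc (1 - Wᵀ) M M⁻¹, hMr, Matrix.mul_one, hZt]
    have e3 : Mᵀ * (1 - W) + (1 - Wᵀ) * M
        = (1 - Wᵀ * W) + (1 - Wᵀ * W) := by
      rw [hMdef, Matrix.transpose_add, Matrix.transpose_one]
      noncomm_ring
    rw [e2, e1, hYY, ← Matrix.mul_add, ← Matrix.add_mul, e3, Matrix.add_mul, Matrix.mul_add]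
  -- X - Xᵀ + YᵀY = Z
  have hXZ : X - Xᵀ + Yᵀ * Y = Z := by
    have hsym : (Yᵀ * Y)ᵀ = Yᵀ * Y := by
      rw [Matrix.transpose_mul, Matrix.transpose_transpose]
    have : Zᵀ = Yᵀ * Y + Yᵀ * Y - Z := by
      rw [eq_sub_iff_add_eq, add_comm]; exact hkey
    rw [hXdef, Matrix.transpose_smul, Matrix.transpose_sub, hsym, this]
    match_scalars <;> ring
  -- 1 + Z and its inverse
  have h1Z : 1 + Z = M⁻¹ + M⁻¹ := by
    have : (1 : Matrix (Fin r) (Fin r) ℝ) + Z = (M + (1 - W)) * M⁻¹ := by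
      rw [Matrix.add_mul, hMr, hZdef]
    rw [this, hMdef]
    have : (1 : Matrix (Fin r) (Fin r) ℝ) + W + (1 - W) = 1 + 1 := by noncomm_ring
    rw [this, Matrix.add_mul, Matrix.one_mul]
  have hinv : (1 + Z)⁻¹ = (2 : ℝ)⁻¹ • M := by
    apply Matrix.inv_eq_right_inv
    rw [h1Z, Matrix.mul_smul, Matrix.add_mul, hMl, ← two_smul ℝ (1 : Matrix (Fin r) (Fin r) ℝ),
      smul_smul]
    norm_num
  refine ⟨X, Y, ?_, ?_⟩
  · rw [hXZ, hinv]
    have h1mZ : 1 - Z = (W + W) * M⁻¹ := by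
      have : (1 : Matrix (Fin r) (Fin r) ℝ) - Z = (M - (1 - W)) * M⁻¹ := by
        rw [Matrix.sub_mul, hMr, hZdef]
      rw [this, hMdef]
      congr 1
      noncomm_ring
    rw [h1mZ, Matrix.mul_smul, Matrix.mul_assoc, hMl, Matrix.mul_one, ← two_smul ℝ W,
      smul_smul]
    norm_num
  · rw [hXZ, hinv, hYdef, Matrix.mul_smul, Matrix.neg_mul, Matrix.mul_assoc, hMl,
      Matrix.mul_one, smul_smul]
    norm_num

/-- For any semi-orthogonal `G = [U; V]`, there is a `±1` diagonal matrix `P` such that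
`I + U P` is invertible; consequently `G P = [U P; V P]` is in the range of the
rectangular Cayley transformation. -/
theorem stmt_5 (r s : ℕ) (U : Matrix (Fin r) (Fin r) ℝ) (V : Matrix (Fin s) (Fin r) ℝ)
    (horth : Uᵀ * U + Vᵀ * V = 1) :
    ∃ p : Fin r → ℝ, (∀ j, p j = -1 ∨ p j = 1) ∧
      IsUnit (1 + U * Matrix.diagonal p) ∧
      ∃ (X : Matrix (Fin r) (Fin r) ℝ) (Y : Matrix (Fin s) (Fin r) ℝ),
        U * Matrix.diagonal p
            = (1 - (X - Xᵀ + Yᵀ * Y)) * (1 + (X - Xᵀ + Yᵀ * Y))⁻¹ ∧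
        V * Matrix.diagonal p
            = (-2 : ℝ) • (Y * (1 + (X - Xᵀ + Yᵀ * Y))⁻¹) := by
  obtain ⟨p, hsign, hdet⟩ := exists_sign r U
  have hDD : Matrix.diagonal p * Matrix.diagonal p = 1 := by
    rw [Matrix.diagonal_mul_diagonal]
    have : (fun j => p j * p j) = fun _ => (1 : ℝ) := by
      funext j; rcases hsign j with h | h <;> rw [h] <;> ring
    rw [this, Matrix.diagonal_one]
  have horth' : (U * Matrix.diagonal p)ᵀ * (U * Matrix.diagonal p)
      + (V * Matrix.diagonal p)ᵀ * (V * Matrix.diagonal p) = 1 := by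
    rw [Matrix.transpose_mul, Matrix.transpose_mul, Matrix.diagonal_transpose]
    calc Matrix.diagonal p * Uᵀ * (U * Matrix.diagonal p)
          + Matrix.diagonal p * Vᵀ * (V * Matrix.diagonal p)
        = Matrix.diagonal p * (Uᵀ * U + Vᵀ * V) * Matrix.diagonal p := by
          rw [Matrix.mul_add, Matrix.add_mul]
          simp only [Matrix.mul_assoc]
      _ = 1 := by rw [horth, Matrix.mul_one, hDD]
  have hunit : IsUnit ((1 : Matrix (Fin r) (Fin r) ℝ) + U * Matrix.diagonal p) := by
    rw [Matrix.isUnit_iff_isUnit_det]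
    exact isUnit_iff_ne_zero.mpr hdet
  obtain ⟨X, Y, h1, h2⟩ := cayley_inv (U * Matrix.diagonal p) (V * Matrix.diagonal p)
    horth' hunit
  exact ⟨p, hsign, hunit, X, Y, h1, h2⟩
end

section
/- If Z = (I+U)^{-1}(I-U) with I + U invertible, Y = -V(I+Z)/2, X = Z/2, and Uᵀ U + Vᵀ V = I, then Z + Xᵀ - X - Yᵀ Y = 0. -/
open Matrix

/-- Key algebraic identity for the inverse Cayley construction:
if `Z = (I+U)⁻¹(I-U)` with `I + U` invertible, `X = Z/2`, `Y = -V(I+Z)/2` and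
`Uᵀ U + Vᵀ V = I`, then `Z + Xᵀ - X - Yᵀ Y = 0`. -/
theorem stmt_6 (r s : ℕ) (U : Matrix (Fin r) (Fin r) ℝ) (V : Matrix (Fin s) (Fin r) ℝ)
    (hinv : IsUnit (1 + U)) (horth : Uᵀ * U + Vᵀ * V = 1)
    (Z : Matrix (Fin r) (Fin r) ℝ) (hZ : Z = (1 + U)⁻¹ * (1 - U))
    (X : Matrix (Fin r) (Fin r) ℝ) (hX : X = (1 / 2 : ℝ) • Z)
    (Y : Matrix (Fin s) (Fin r) ℝ) (hY : Y = (-(1 / 2) : ℝ) • (V * (1 + Z))) :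
    Z + Xᵀ - X - Yᵀ * Y = 0 := by
  set A : Matrix (Fin r) (Fin r) ℝ := 1 + U with hA
  have hdet : IsUnit A.det := (Matrix.isUnit_iff_isUnit_det A).mp hinv
  set P : Matrix (Fin r) (Fin r) ℝ := A⁻¹ with hP
  have hAP : A * P = 1 := Matrix.mul_nonsing_inv A hdet
  have hPA : P * A = 1 := Matrix.nonsing_inv_mul A hdet
  have hPAt : Pᵀ * Aᵀ = 1 := by
    have := congrArg Matrix.transpose hAP
    simpa [Matrix.transpose_mul] using this
  have hcommA : (1 - U) * A = A * (1 - U) := by rw [hA]; noncomm_ring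
  have hPcomm : P * (1 - U) = (1 - U) * P := by
    calc P * (1 - U) = P * (1 - U) * (A * P) := by rw [hAP, mul_one]
      _ = P * ((1 - U) * A) * P := by simp only [Matrix.mul_assoc]
      _ = P * (A * (1 - U)) * P := by rw [hcommA]
      _ = (P * A) * ((1 - U) * P) := by simp only [Matrix.mul_assoc]
      _ = (1 - U) * P := by rw [hPA, one_mul]
  have hZ' : Z = (1 - U) * P := by rw [hZ]; exact hPcomm
  have hZt : Zᵀ = Pᵀ * (1 - Uᵀ) := by
    rw [hZ']; simp [Matrix.transpose_mul]
  have h1Z : (1 : Matrix (Fin r) (Fin r) ℝ) + Z = (2 : ℝ) • P := by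
    rw [hZ]
    calc (1 : Matrix (Fin r) (Fin r) ℝ) + P * (1 - U)
        = P * A + P * (1 - U) := by rw [hPA]
      _ = P * (A + (1 - U)) := (Matrix.mul_add P A (1 - U)).symm
      _ = P * ((2 : ℝ) • 1) := by rw [hA]; congr 1; module
      _ = (2 : ℝ) • P := by simp
  have hY' : Y = -(V * P) := by
    rw [hY, h1Z, Matrix.mul_smul, smul_smul]
    norm_num
  have hVV : Vᵀ * V = 1 - Uᵀ * U := by
    rw [eq_sub_iff_add_eq, add_comm]; exact horth
  have hYY : Yᵀ * Y = Pᵀ * ((1 - Uᵀ * U) * P) := by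
    rw [hY']
    simp only [Matrix.transpose_neg, Matrix.transpose_mul, Matrix.neg_mul,
      Matrix.mul_neg, neg_neg]
    rw [show Pᵀ * Vᵀ * (V * P) = Pᵀ * ((Vᵀ * V) * P) by
      simp only [Matrix.mul_assoc], hVV]
  have key : Aᵀ * (1 - U) + (1 - Uᵀ) * A = (2 : ℝ) • (1 - Uᵀ * U) := by
    rw [hA, two_smul]
    simp only [Matrix.transpose_add, Matrix.transpose_one]
    noncomm_ring
  have main : (1 - U) * P + Pᵀ * (1 - Uᵀ)
      = (2 : ℝ) • (Pᵀ * ((1 - Uᵀ * U) * P)) := by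
    calc (1 - U) * P + Pᵀ * (1 - Uᵀ)
        = (Pᵀ * Aᵀ) * ((1 - U) * P) + Pᵀ * ((1 - Uᵀ) * (A * P)) := by
          rw [hPAt, hAP, one_mul, mul_one]
      _ = Pᵀ * ((Aᵀ * (1 - U) + (1 - Uᵀ) * A) * P) := by
          simp only [Matrix.mul_assoc, Matrix.add_mul, Matrix.mul_add]
      _ = Pᵀ * (((2 : ℝ) • (1 - Uᵀ * U)) * P) := by rw [key]
      _ = (2 : ℝ) • (Pᵀ * ((1 - Uᵀ * U) * P)) := by
          simp [Matrix.smul_mul, Matrix.mul_smul]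
  have hE : Z + Xᵀ - X - Yᵀ * Y
      = (1 / 2 : ℝ) • ((1 - U) * P + Pᵀ * (1 - Uᵀ)) - Pᵀ * ((1 - Uᵀ * U) * P) := by
    rw [hX, Matrix.transpose_smul, hYY, hZt, hZ']
    module
  rw [hE, main]
  module
end

section
/- Let Q ∈ ℝ^{r×m} and K ∈ ℝ^{r×n}. Then for every j, the j-th largest singular value of 2 Qᵀ K is at most the j-th largest eigenvalue of Q Qᵀ + K Kᵀ. -/
open Matrix Finset

local notation "⟪" x ", " y "⟫" => @inner ℝ _ _ x y


section core
variable {ι : Type*} [Fintype ι]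

/-- quadratic form upper bound on span of orthonormal eigenvectors -/
lemma span_form_le {q : ℕ} (A : Matrix ι ι ℝ) (v : Fin q → EuclideanSpace ℝ ι)
    (hv : Orthonormal ℝ v) (d : Fin q → ℝ) (hvA : ∀ i, A *ᵥ (v i : ι → ℝ) = d i • (v i : ι → ℝ))
    (s : ℝ) (hd : ∀ i, d i ≤ s) (x : EuclideanSpace ℝ ι)
    (hx : x ∈ Submodule.span ℝ (Set.range v)) :
    ⟪x, (WithLp.toLp 2 (A *ᵥ (x : ι → ℝ)) : EuclideanSpace ℝ ι)⟫ ≤ s * ‖x‖ ^ 2 := by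
  rw [Submodule.mem_span_range_iff_exists_fun] at hx
  obtain ⟨f, rfl⟩ := hx
  have hAx : (WithLp.toLp 2 (A *ᵥ ((∑ i, f i • v i : EuclideanSpace ℝ ι) : ι → ℝ)) : EuclideanSpace ℝ ι)
      = ∑ i, (f i * d i) • v i := by
    rw [WithLp.ext_iff, WithLp.ofLp_toLp, WithLp.ofLp_sum (f := fun i => (f i * d i) • v i)]
    have h1 : (A *ᵥ ((∑ i, f i • v i : EuclideanSpace ℝ ι) : ι → ℝ) : ι → ℝ)
        = ∑ i, A.mulVecLin (f i • (v i : ι → ℝ)) := by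
      rw [WithLp.ofLp_sum, ← map_sum]; rfl
    refine h1.trans ?_
    refine Finset.sum_congr rfl fun i _ => ?_
    show A *ᵥ (f i • ((v i : ι → ℝ))) = (f i * d i) • (v i : ι → ℝ)
    rw [Matrix.mulVec_smul, hvA i, smul_smul]
  rw [hAx, Orthonormal.inner_sum hv]
  have hn : ‖(∑ i, f i • v i : EuclideanSpace ℝ ι)‖ ^ 2 = ∑ i, f i * f i := by
    rw [← real_inner_self_eq_norm_sq, Orthonormal.inner_sum hv]
    simp
  rw [hn, Finset.mul_sum]
  refine Finset.sum_le_sum fun i _ => ?_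
  simp only [starRingEnd_apply, star_trivial]
  calc f i * (f i * d i) = d i * (f i * f i) := by ring
  _ ≤ s * (f i * f i) := mul_le_mul_of_nonneg_right (hd i) (mul_self_nonneg _)
end core

section core2
variable {ι : Type*} [Fintype ι]

lemma span_form_ge {q : ℕ} (A : Matrix ι ι ℝ) (v : Fin q → EuclideanSpace ℝ ι)
    (hv : Orthonormal ℝ v) (d : Fin q → ℝ) (hvA : ∀ i, A *ᵥ (v i : ι → ℝ) = d i • (v i : ι → ℝ))
    (t : ℝ) (hd : ∀ i, t ≤ d i) (x : EuclideanSpace ℝ ι)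
    (hx : x ∈ Submodule.span ℝ (Set.range v)) :
    t * ‖x‖ ^ 2 ≤ ⟪x, (WithLp.toLp 2 (A *ᵥ (x : ι → ℝ)) : EuclideanSpace ℝ ι)⟫ := by
  have h := span_form_le (-A) v hv (fun i => -(d i)) (fun i => by
      rw [Matrix.neg_mulVec, hvA i, neg_smul]) (-t) (fun i => neg_le_neg (hd i)) x hx
  have hneg : (WithLp.toLp 2 ((-A) *ᵥ (x : ι → ℝ)) : EuclideanSpace ℝ ι)
      = -((WithLp.toLp 2 (A *ᵥ (x : ι → ℝ)) : EuclideanSpace ℝ ι)) := by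
    show WithLp.toLp 2 ((-A) *ᵥ (x : ι → ℝ)) = WithLp.toLp 2 (-(A *ᵥ (x : ι → ℝ)))
    rw [Matrix.neg_mulVec]
  rw [hneg, inner_neg_right, neg_mul] at h
  linarith

/-- Two orthonormal families: eigenvector family with small eigenvalues, and a subspace
family whose span has large quadratic form; too many vectors yields a contradiction. -/
lemma clash {p q : ℕ} (A : Matrix ι ι ℝ) (hpq : Fintype.card ι < p + q) (t : ℝ)
    (w : Fin p → EuclideanSpace ℝ ι) (hw : Orthonormal ℝ w)
    (hW : ∀ x ∈ Submodule.span ℝ (Set.range w),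
      t * ‖x‖ ^ 2 ≤ ⟪x, (WithLp.toLp 2 (A *ᵥ (x : ι → ℝ)) : EuclideanSpace ℝ ι)⟫)
    (v : Fin q → EuclideanSpace ℝ ι) (hv : Orthonormal ℝ v)
    (d : Fin q → ℝ) (hd : ∀ i, d i < t)
    (hvA : ∀ i, A *ᵥ (v i : ι → ℝ) = d i • (v i : ι → ℝ)) : False := by
  classical
  set W := Submodule.span ℝ (Set.range w)
  set V := Submodule.span ℝ (Set.range v)
  have hWrank : Module.finrank ℝ W = p := by
    rw [finrank_span_eq_card hw.linearIndependent, Fintype.card_fin]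
  have hVrank : Module.finrank ℝ V = q := by
    rw [finrank_span_eq_card hv.linearIndependent, Fintype.card_fin]
  have hdim : 0 < Module.finrank ℝ ↥(W ⊓ V) := by
    have h1 := Submodule.finrank_sup_add_finrank_inf_eq W V
    have h2 : Module.finrank ℝ ↥(W ⊔ V) ≤ Fintype.card ι := by
      have := Submodule.finrank_le (W ⊔ V)
      simpa [finrank_euclideanSpace] using this
    omega
  obtain ⟨x, hxWV, hx0⟩ := Submodule.exists_mem_ne_zero_of_ne_bot (p := W ⊓ V) (by
    intro hbot
    rw [hbot] at hdim
    simp at hdim)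
  have hxW : x ∈ W := hxWV.1
  have hxV : x ∈ Submodule.span ℝ (Set.range v) := hxWV.2
  -- upper bound strictly below t * ‖x‖^2
  rw [Submodule.mem_span_range_iff_exists_fun] at hxV
  obtain ⟨f, hf⟩ := hxV
  have hxnorm : (0:ℝ) < ‖x‖ ^ 2 := by
    have := norm_pos_iff.mpr hx0
    positivity
  have hub : ⟪x, (WithLp.toLp 2 (A *ᵥ (x : ι → ℝ)) : EuclideanSpace ℝ ι)⟫ < t * ‖x‖ ^ 2 := by
    have hAx : (WithLp.toLp 2 (A *ᵥ (x : ι → ℝ)) : EuclideanSpace ℝ ι) = ∑ i, (f i * d i) • v i := by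
      rw [← hf]
      rw [WithLp.ext_iff, WithLp.ofLp_toLp, WithLp.ofLp_sum (f := fun i => (f i * d i) • v i)]
      have h1 : (A *ᵥ ((∑ i, f i • v i : EuclideanSpace ℝ ι) : ι → ℝ) : ι → ℝ)
          = ∑ i, A.mulVecLin (f i • (v i : ι → ℝ)) := by
        rw [WithLp.ofLp_sum, ← map_sum]; rfl
      refine h1.trans ?_
      refine Finset.sum_congr rfl fun i _ => ?_
      show A *ᵥ (f i • ((v i : ι → ℝ))) = (f i * d i) • (v i : ι → ℝ)
      rw [Matrix.mulVec_smul, hvA i, smul_smul]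
    have hxn : ‖x‖ ^ 2 = ∑ i, f i * f i := by
      rw [← real_inner_self_eq_norm_sq, ← hf, Orthonormal.inner_sum hv]; simp
    obtain ⟨i₀, hi₀⟩ : ∃ i₀, f i₀ ≠ 0 := by
      by_contra h
      push_neg at h
      apply hx0
      rw [← hf]
      simp [h]
    rw [hAx]
    nth_rewrite 1 [← hf]
    rw [Orthonormal.inner_sum hv, hxn, Finset.mul_sum]
    refine Finset.sum_lt_sum (fun i _ => ?_) ⟨i₀, Finset.mem_univ _, ?_⟩
    · simp only [starRingEnd_apply, star_trivial]
      calc f i * (f i * d i) = d i * (f i * f i) := by ring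
      _ ≤ t * (f i * f i) := mul_le_mul_of_nonneg_right (hd i).le (mul_self_nonneg _)
    · simp only [starRingEnd_apply, star_trivial]
      calc f i₀ * (f i₀ * d i₀) = d i₀ * (f i₀ * f i₀) := by ring
      _ < t * (f i₀ * f i₀) := by
          exact mul_lt_mul_of_pos_right (hd i₀) (by
            have := mul_self_pos.mpr hi₀
            linarith)
  exact absurd (hW x hxW) (not_le.mpr hub)
end core2

section core3
variable {ι : Type*} [Fintype ι] [DecidableEq ι]

lemma inner_eq_dot (x y : EuclideanSpace ℝ ι) : ⟪x, y⟫ = (x : ι → ℝ) ⬝ᵥ (y : ι → ℝ) := by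
  rw [EuclideanSpace.inner_eq_star_dotProduct]
  exact dotProduct_comm _ _

/-- If the quadratic form of a Hermitian matrix is `≥ t` on the span of an orthonormal
family of `p` vectors, then `A` has `p` orthonormal eigenvectors with eigenvalues `≥ t`. -/
lemma exists_eigvecs {p : ℕ} (A : Matrix ι ι ℝ) (hA : A.IsHermitian) (t : ℝ)
    (w : Fin p → EuclideanSpace ℝ ι) (hw : Orthonormal ℝ w)
    (hW : ∀ x ∈ Submodule.span ℝ (Set.range w),
      t * ‖x‖ ^ 2 ≤ ⟪x, (WithLp.toLp 2 (A *ᵥ (x : ι → ℝ)) : EuclideanSpace ℝ ι)⟫) :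
    ∃ (w' : Fin p → EuclideanSpace ℝ ι) (μ : Fin p → ℝ), Orthonormal ℝ w' ∧
      (∀ i, t ≤ μ i) ∧ (∀ i, A *ᵥ (w' i : ι → ℝ) = μ i • (w' i : ι → ℝ)) := by
  classical
  set G : Finset ι := Finset.univ.filter (fun i => t ≤ hA.eigenvalues i) with hG
  by_cases hp : p ≤ G.card
  · set e : Fin p → ι := fun i => (G.equivFin.symm (Fin.castLE hp i) : ι) with he
    have he_inj : Function.Injective e := by
      intro a b hab
      have := Subtype.coe_injective hab
      have := G.equivFin.symm.injective this
      exact Fin.castLE_injective hp this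
    have heG : ∀ i, e i ∈ G := fun i => (G.equivFin.symm (Fin.castLE hp i)).2
    refine ⟨fun i => hA.eigenvectorBasis (e i), fun i => hA.eigenvalues (e i),
      hA.eigenvectorBasis.orthonormal.comp e he_inj, fun i => ?_, fun i =>
      hA.mulVec_eigenvectorBasis (e i)⟩
    have := heG i
    rw [hG, Finset.mem_filter] at this
    exact this.2
  · exfalso
    push_neg at hp
    set q := Gᶜ.card with hq
    have hcard : G.card + q = Fintype.card ι := by
      rw [hq]
      exact Finset.card_add_card_compl G
    set e : Fin q → ι := fun k => (Gᶜ.equivFin.symm k : ι) with he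
    have he_inj : Function.Injective e := by
      intro a b hab
      exact Gᶜ.equivFin.symm.injective (Subtype.coe_injective hab)
    have heG : ∀ k, e k ∈ Gᶜ := fun k => (Gᶜ.equivFin.symm k).2
    refine clash A ?_ t w hw hW (fun k => hA.eigenvectorBasis (e k))
      (hA.eigenvectorBasis.orthonormal.comp e he_inj) (fun k => hA.eigenvalues (e k))
      (fun k => ?_) (fun k => hA.mulVec_eigenvectorBasis (e k))
    · omega
    · have := heG k
      rw [Finset.mem_compl, hG, Finset.mem_filter] at this
      push_neg at this
      exact this (Finset.mem_univ _)
end core3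


lemma dot_mulVec_mulVec {ι κ : Type*} [Fintype ι] [Fintype κ] (C : Matrix κ ι ℝ) (x y : ι → ℝ) :
    (C *ᵥ x) ⬝ᵥ (C *ᵥ y) = x ⬝ᵥ ((Cᵀ * C) *ᵥ y) := by
  rw [← mulVec_mulVec, Matrix.dotProduct_mulVec x, vecMul_transpose]

lemma real_isHermitian_self_mul_transpose {ι κ : Type*} [Fintype ι] [Fintype κ]
    (P : Matrix ι κ ℝ) : (P * Pᵀ).IsHermitian := by
  rw [← conjTranspose_eq_transpose_of_trivial]
  exact (posSemidef_self_mul_conjTranspose P).1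

lemma real_posSemidef_self_mul_transpose {ι κ : Type*} [Fintype ι] [Fintype κ]
    (P : Matrix ι κ ℝ) : (P * Pᵀ).PosSemidef := by
  rw [← conjTranspose_eq_transpose_of_trivial]
  exact posSemidef_self_mul_conjTranspose P

lemma dot_sum_elim {ι κ : Type*} [Fintype ι] [Fintype κ] (a c : ι → ℝ) (b d : κ → ℝ) :
    Sum.elim a b ⬝ᵥ Sum.elim c d = a ⬝ᵥ c + b ⬝ᵥ d := by
  simp [dotProduct, Fintype.sum_sum_type]

lemma sum_elim_smul {ι κ : Type*} (c : ℝ) (a : ι → ℝ) (b : κ → ℝ) :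
    Sum.elim (c • a) (c • b) = c • Sum.elim a b := by
  funext x
  cases x <;> rfl


/-- `sval W j` is the `j`-th largest singular value of `W` (zero beyond the rank). -/
noncomputable def sval {m n : ℕ} (W : Matrix (Fin m) (Fin n) ℝ) (j : ℕ) : ℝ :=
  if h : j < n then
    Real.sqrt ((Matrix.isHermitian_conjTranspose_mul_self W).eigenvalues
      (Tuple.sort (Matrix.isHermitian_conjTranspose_mul_self W).eigenvalues (Fin.rev ⟨j, h⟩)))
  else 0

/-- `evalDesc hA j` is the `j`-th largest eigenvalue of the Hermitian matrix `A`. -/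
noncomputable def evalDesc {n : ℕ} {A : Matrix (Fin n) (Fin n) ℝ} (hA : A.IsHermitian)
    (j : ℕ) : ℝ :=
  if h : j < n then hA.eigenvalues (Tuple.sort hA.eigenvalues (Fin.rev ⟨j, h⟩)) else 0

/-- If a Hermitian `N×N` matrix has `j+1` orthonormal eigenvectors with eigenvalues `≥ t`,
then its `j`-th largest eigenvalue is `≥ t`. -/
lemma le_evalDesc {N j : ℕ} {A : Matrix (Fin N) (Fin N) ℝ} (hA : A.IsHermitian) (t : ℝ)
    (w : Fin (j+1) → EuclideanSpace ℝ (Fin N)) (hw : Orthonormal ℝ w) (μ : Fin (j+1) → ℝ)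
    (hμ : ∀ i, t ≤ μ i) (hwA : ∀ i, A *ᵥ (w i : Fin N → ℝ) = μ i • (w i : Fin N → ℝ)) :
    t ≤ evalDesc hA j := by
  classical
  have hjN : j < N := by
    have := hw.linearIndependent.fintype_card_le_finrank
    simp [finrank_euclideanSpace] at this
    omega
  rw [evalDesc, dif_pos hjN]
  by_contra hcon
  push_neg at hcon
  set f := hA.eigenvalues with hf
  -- the low eigenvectors
  set e : Fin (N - j) → Fin N := fun k => Tuple.sort f (Fin.rev ⟨j + k, by omega⟩) with he
  have he_inj : Function.Injective e := by
    intro a b hab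
    have h1 := (Tuple.sort f).injective hab
    have h2 := Fin.rev_injective h1
    have := Fin.mk.injEq (j + a) _ (j + b) _ ▸ h2
    simp only [Fin.mk.injEq] at h2
    exact Fin.val_injective (by omega)
  have hd_lt : ∀ k, f (e k) < t := by
    intro k
    refine lt_of_le_of_lt ?_ hcon
    have : Fin.rev (⟨j + k, by omega⟩ : Fin N) ≤ Fin.rev ⟨j, hjN⟩ := by
      rw [Fin.rev_le_rev]
      exact Fin.mk_le_mk.mpr (Nat.le_add_right _ _)
    exact Tuple.monotone_sort f this
  exact clash A (by simp only [Fintype.card_fin]; omega) t w hw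
    (fun x hx => span_form_ge A w hw μ hwA t hμ x hx)
    (fun k => hA.eigenvectorBasis (e k))
    (hA.eigenvectorBasis.orthonormal.comp e he_inj)
    (fun k => f (e k)) hd_lt
    (fun k => hA.mulVec_eigenvectorBasis (e k))

/-- Matrix arithmetic-geometric mean inequality: for every `j`, the `j`-th largest
singular value of `2 Qᵀ K` is at most the `j`-th largest eigenvalue of `Q Qᵀ + K Kᵀ`. -/
theorem stmt_7 (r m n : ℕ) (Q : Matrix (Fin r) (Fin m) ℝ) (K : Matrix (Fin r) (Fin n) ℝ)
    (hQK : (Q * Qᵀ + K * Kᵀ).IsHermitian) :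
    ∀ j : ℕ, sval ((2 : ℝ) • (Qᵀ * K)) j ≤ evalDesc hQK j := by
  intro j
  have hSpsd : (Q * Qᵀ + K * Kᵀ).PosSemidef :=
    (real_posSemidef_self_mul_transpose Q).add (real_posSemidef_self_mul_transpose K)
  have hED0 : 0 ≤ evalDesc hQK j := by
    rw [evalDesc]
    split
    · exact hSpsd.eigenvalues_nonneg _
    · exact le_refl 0
  set X : Matrix (Fin m) (Fin n) ℝ := (2 : ℝ) • (Qᵀ * K) with hX
  rcases le_or_gt (sval X j) 0 with hσ | hσ
  · exact le_trans hσ hED0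
  set σ := sval X j with hσdef
  have hjn : j < n := by
    by_contra h
    rw [hσdef, sval, dif_neg h] at hσ
    exact lt_irrefl 0 hσ
  -- eigen data for M = Xᵀ X
  set M : Matrix (Fin n) (Fin n) ℝ := Xᵀ * X with hMdef
  have hM : M.IsHermitian := Matrix.isHermitian_conjTranspose_mul_self X
  have hMpsd : M.PosSemidef := by
    rw [hMdef, ← conjTranspose_eq_transpose_of_trivial]
    exact posSemidef_conjTranspose_mul_self X
  set e : Fin (j+1) → Fin n := fun i => Tuple.sort hM.eigenvalues (Fin.rev ⟨i, by omega⟩) with he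
  have he_inj : Function.Injective e := by
    intro a b hab
    have h1 := Fin.rev_injective ((Tuple.sort hM.eigenvalues).injective hab)
    simp only [Fin.mk.injEq] at h1
    exact Fin.val_injective h1
  set lam : Fin (j+1) → ℝ := fun i => hM.eigenvalues (e i) with hlam
  have hσ_eq : σ = Real.sqrt (lam (Fin.last j)) := by
    rw [hσdef, sval, dif_pos hjn]
    rfl
  have hlam_ge : ∀ i, Real.sqrt (lam (Fin.last j)) ≤ Real.sqrt (lam i) := by
    intro i
    apply Real.sqrt_le_sqrt
    apply Tuple.monotone_sort hM.eigenvalues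
    rw [Fin.rev_le_rev]
    exact Fin.mk_le_mk.mpr (Fin.is_le i)
  set s : Fin (j+1) → ℝ := fun i => Real.sqrt (lam i) with hs
  have hs_pos : ∀ i, 0 < s i := fun i => lt_of_lt_of_le (hσ_eq ▸ hσ) (hlam_ge i)
  have hs_sq : ∀ i, s i ^ 2 = lam i := fun i =>
    Real.sq_sqrt (hMpsd.eigenvalues_nonneg _)
  have hsσ : ∀ i, σ ≤ s i := fun i => le_of_eq_of_le hσ_eq (hlam_ge i)
  -- singular vectors
  set v : Fin (j+1) → EuclideanSpace ℝ (Fin n) := fun i => hM.eigenvectorBasis (e i) with hv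
  have hv_on : Orthonormal ℝ v := hM.eigenvectorBasis.orthonormal.comp e he_inj
  have hMv : ∀ i, M *ᵥ (v i : Fin n → ℝ) = lam i • (v i : Fin n → ℝ) := fun i =>
    hM.mulVec_eigenvectorBasis (e i)
  set u : Fin (j+1) → EuclideanSpace ℝ (Fin m) := fun i => WithLp.toLp 2 ((s i)⁻¹ • (X *ᵥ (v i : Fin n → ℝ))) with hu
  have hXv : ∀ i, X *ᵥ (v i : Fin n → ℝ) = s i • (u i : Fin m → ℝ) := by
    intro i
    show X *ᵥ (v i : Fin n → ℝ) = s i • ((s i)⁻¹ • (X *ᵥ (v i : Fin n → ℝ)))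
    rw [smul_inv_smul₀ (hs_pos i).ne']
  have hXtu : ∀ i, Xᵀ *ᵥ (u i : Fin m → ℝ) = s i • (v i : Fin n → ℝ) := by
    intro i
    show Xᵀ *ᵥ ((s i)⁻¹ • (X *ᵥ (v i : Fin n → ℝ))) = s i • (v i : Fin n → ℝ)
    rw [Matrix.mulVec_smul, mulVec_mulVec, ← hMdef, hMv i, smul_smul]
    congr 1
    rw [← hs_sq i]
    field_simp
  have hv_dot : ∀ i k, (v i : Fin n → ℝ) ⬝ᵥ (v k : Fin n → ℝ) = if i = k then 1 else 0 := by
    intro i k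
    rw [← inner_eq_dot]
    exact orthonormal_iff_ite.mp hv_on i k
  have hu_dot : ∀ i k, (u i : Fin m → ℝ) ⬝ᵥ (u k : Fin m → ℝ) = if i = k then 1 else 0 := by
    intro i k
    show ((s i)⁻¹ • (X *ᵥ (v i : Fin n → ℝ))) ⬝ᵥ ((s k)⁻¹ • (X *ᵥ (v k : Fin n → ℝ)))
      = if i = k then 1 else 0
    rw [smul_dotProduct, dotProduct_smul, dot_mulVec_mulVec, ← hMdef, hMv k,
      dotProduct_smul, hv_dot i k]
    by_cases h : i = k
    · subst h
      simp only [if_pos rfl, smul_eq_mul, mul_one]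
      rw [← hs_sq i, sq]
      field_simp
      exact div_self (hs_pos i).ne'
    · simp [h]
  -- block matrices
  set P : Matrix (Fin m ⊕ Fin n) (Fin r) ℝ := fromRows Qᵀ Kᵀ with hP
  set B : Matrix (Fin m ⊕ Fin n) (Fin m ⊕ Fin n) ℝ := P * Pᵀ with hBdef
  have hBherm : B.IsHermitian := real_isHermitian_self_mul_transpose P
  set H : Matrix (Fin m ⊕ Fin n) (Fin m ⊕ Fin n) ℝ := fromBlocks 0 X Xᵀ 0 with hH
  set P₂ : Matrix (Fin m ⊕ Fin n) (Fin r) ℝ := fromRows Qᵀ (-Kᵀ) with hP₂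
  have hPPt : B = fromBlocks (Qᵀ*Q) (Qᵀ*K) (Kᵀ*Q) (Kᵀ*K) := by
    rw [hBdef, hP, transpose_fromRows, transpose_transpose, transpose_transpose,
      fromRows_mul_fromCols]
  have hP₂P₂t : P₂ * P₂ᵀ = fromBlocks (Qᵀ*Q) (-(Qᵀ*K)) (-(Kᵀ*Q)) (Kᵀ*K) := by
    rw [hP₂, transpose_fromRows, transpose_neg, transpose_transpose, transpose_transpose,
      fromRows_mul_fromCols]
    simp only [Matrix.mul_neg, Matrix.neg_mul, neg_neg]
  have hXt : Xᵀ = (2:ℝ) • (Kᵀ * Q) := by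
    rw [hX, transpose_smul, transpose_mul, transpose_transpose]
  have hdecomp : B = H + P₂ * P₂ᵀ := by
    have h1 : X + -(Qᵀ*K) = Qᵀ*K := by rw [hX, two_smul]; abel
    have h2 : Xᵀ + -(Kᵀ*Q) = Kᵀ*Q := by rw [hXt, two_smul]; abel
    rw [hPPt, hH, hP₂P₂t, fromBlocks_add, zero_add, zero_add, h1, h2]
  set wf : Fin (j+1) → EuclideanSpace ℝ (Fin m ⊕ Fin n) :=
    fun i => WithLp.toLp 2 ((Real.sqrt 2)⁻¹ • Sum.elim (u i : Fin m → ℝ) (v i : Fin n → ℝ) :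
      Fin m ⊕ Fin n → ℝ) with hwf
  have hHw : ∀ i, H *ᵥ (wf i : Fin m ⊕ Fin n → ℝ) = s i • (wf i : Fin m ⊕ Fin n → ℝ) := by
    intro i
    show H *ᵥ ((Real.sqrt 2)⁻¹ • Sum.elim (u i : Fin m → ℝ) (v i : Fin n → ℝ))
      = s i • ((Real.sqrt 2)⁻¹ • Sum.elim (u i : Fin m → ℝ) (v i : Fin n → ℝ))
    rw [Matrix.mulVec_smul]
    rw [smul_comm]
    congr 1
    have hcomp : H *ᵥ Sum.elim (u i : Fin m → ℝ) (v i : Fin n → ℝ)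
        = Sum.elim (X *ᵥ (v i : Fin n → ℝ)) (Xᵀ *ᵥ (u i : Fin m → ℝ)) := by
      rw [hH, fromBlocks_mulVec]
      simp only [Sum.elim_comp_inl, Sum.elim_comp_inr, Matrix.zero_mulVec, zero_add, add_zero]
    rw [hcomp, hXv i, hXtu i, sum_elim_smul]
  have hw_on : Orthonormal ℝ wf := by
    rw [orthonormal_iff_ite]
    intro i k
    rw [inner_eq_dot]
    show ((Real.sqrt 2)⁻¹ • Sum.elim (u i : Fin m → ℝ) (v i : Fin n → ℝ))
      ⬝ᵥ ((Real.sqrt 2)⁻¹ • Sum.elim (u k : Fin m → ℝ) (v k : Fin n → ℝ)) = _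
    rw [smul_dotProduct, dotProduct_smul, dot_sum_elim, hu_dot i k, hv_dot i k]
    by_cases h : i = k
    · subst h
      simp only [if_pos rfl, smul_eq_mul, if_true, eq_self_iff_true]
      have h2 : Real.sqrt 2 * Real.sqrt 2 = 2 := Real.mul_self_sqrt (by norm_num)
      rw [show (1:ℝ) + 1 = 2 by norm_num, ← mul_assoc, ← mul_inv, h2]
      norm_num
    · simp [h]
  have hP₂psd := real_posSemidef_self_mul_transpose P₂
  have hspan : ∀ x ∈ Submodule.span ℝ (Set.range wf),
      σ * ‖x‖ ^ 2 ≤ ⟪x, (WithLp.toLp 2 (B *ᵥ (x : Fin m ⊕ Fin n → ℝ)) :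
        EuclideanSpace ℝ (Fin m ⊕ Fin n))⟫ := by
    intro x hx
    have h1 := span_form_ge H wf hw_on s hHw σ hsσ x hx
    have h2 : (0:ℝ) ≤ (x : Fin m ⊕ Fin n → ℝ) ⬝ᵥ ((P₂ * P₂ᵀ) *ᵥ (x : Fin m ⊕ Fin n → ℝ)) := by
      have := hP₂psd.re_dotProduct_nonneg (x : Fin m ⊕ Fin n → ℝ)
      simpa using this
    have h3 : ⟪x, (WithLp.toLp 2 (B *ᵥ (x : Fin m ⊕ Fin n → ℝ)) :
        EuclideanSpace ℝ (Fin m ⊕ Fin n))⟫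
        = ⟪x, (WithLp.toLp 2 (H *ᵥ (x : Fin m ⊕ Fin n → ℝ)) :
        EuclideanSpace ℝ (Fin m ⊕ Fin n))⟫
          + (x : Fin m ⊕ Fin n → ℝ) ⬝ᵥ ((P₂ * P₂ᵀ) *ᵥ (x : Fin m ⊕ Fin n → ℝ)) := by
      rw [inner_eq_dot, inner_eq_dot]
      simp only [WithLp.ofLp_toLp]
      rw [hdecomp, Matrix.add_mulVec, dotProduct_add]
    rw [h3]
    linarith
  obtain ⟨w', μ, hw'_on, hμ, hw'A⟩ := exists_eigvecs B hBherm σ wf hw_on hspan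
  have hμpos : ∀ i, 0 < μ i := fun i => lt_of_lt_of_le hσ (hμ i)
  have hμsqrt : ∀ i, Real.sqrt (μ i) * Real.sqrt (μ i) = μ i := fun i =>
    Real.mul_self_sqrt (hμpos i).le
  set z : Fin (j+1) → EuclideanSpace ℝ (Fin r) :=
    fun i => WithLp.toLp 2 ((Real.sqrt (μ i))⁻¹ • (Pᵀ *ᵥ (w' i : Fin m ⊕ Fin n → ℝ)) : Fin r → ℝ) with hzdef
  have hSPP : Q * Qᵀ + K * Kᵀ = Pᵀ * P := by
    rw [hP, transpose_fromRows, transpose_transpose, transpose_transpose,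
      fromCols_mul_fromRows]
  have hSz : ∀ i, (Q * Qᵀ + K * Kᵀ) *ᵥ (z i : Fin r → ℝ) = μ i • (z i : Fin r → ℝ) := by
    intro i
    show (Q * Qᵀ + K * Kᵀ) *ᵥ ((Real.sqrt (μ i))⁻¹ • (Pᵀ *ᵥ (w' i : Fin m ⊕ Fin n → ℝ)))
      = μ i • ((Real.sqrt (μ i))⁻¹ • (Pᵀ *ᵥ (w' i : Fin m ⊕ Fin n → ℝ)))
    rw [Matrix.mulVec_smul, hSPP, mulVec_mulVec, Matrix.mul_assoc, ← mulVec_mulVec, ← hBdef,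
      hw'A i, Matrix.mulVec_smul, smul_comm]
  have hz_dot : ∀ i k, ⟪z i, z k⟫ = if i = k then (1:ℝ) else 0 := by
    intro i k
    rw [inner_eq_dot]
    show ((Real.sqrt (μ i))⁻¹ • (Pᵀ *ᵥ (w' i : Fin m ⊕ Fin n → ℝ)))
      ⬝ᵥ ((Real.sqrt (μ k))⁻¹ • (Pᵀ *ᵥ (w' k : Fin m ⊕ Fin n → ℝ))) = _
    rw [smul_dotProduct, dotProduct_smul, dot_mulVec_mulVec,
      transpose_transpose, ← hBdef, hw'A k, dotProduct_smul]
    have hdotw : (w' i : Fin m ⊕ Fin n → ℝ) ⬝ᵥ (w' k : Fin m ⊕ Fin n → ℝ)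
        = if i = k then 1 else 0 := by
      rw [← inner_eq_dot]
      exact orthonormal_iff_ite.mp hw'_on i k
    rw [hdotw]
    by_cases h : i = k
    · subst h
      simp only [if_pos rfl, smul_eq_mul, if_true, eq_self_iff_true, mul_one]
      rw [← mul_assoc, ← mul_inv, hμsqrt i]
      field_simp
      exact div_self (hμpos i).ne'
    · simp [h]
  exact le_evalDesc hQK σ z (orthonormal_iff_ite.mpr hz_dot) μ hμ hSz
end

section
/- Let S = diag(s) with s ∈ ℝ^r_{++}, and let A ∈ ℝ^{r×m}, B ∈ ℝ^{r×n} with A Aᵀ + B Bᵀ = I_r. Then W = 2 Aᵀ S B satisfies rank(W) ≤ r and σ_j(W) ≤ σ_j(S) for all j. -/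
open Matrix

set_option linter.unusedSectionVars false
set_option maxHeartbeats 1000000

open Matrix Finset Module

namespace NBAux

local notation "⟪" x ", " y "⟫" => (inner ℝ x y : ℝ)

variable {ι : Type*} [Fintype ι] [DecidableEq ι]

noncomputable def toE {ι : Type*} (v : ι → ℝ) : EuclideanSpace ℝ ι :=
  (WithLp.equiv 2 (ι → ℝ)).symm v

@[simp] lemma toE_apply (v : ι → ℝ) (i : ι) : toE v i = v i := rfl

lemma inner_eq_dot (x y : EuclideanSpace ℝ ι) : ⟪x, y⟫ = (⇑x) ⬝ᵥ (⇑y) := by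
  simp [PiLp.inner_apply, RCLike.inner_apply, dotProduct, conj_trivial, mul_comm]

lemma dot_self_nonneg (v : ι → ℝ) : 0 ≤ v ⬝ᵥ v :=
  Finset.sum_nonneg fun i _ => mul_self_nonneg _

lemma dot_sumElim {κ₁ κ₂ : Type*} [Fintype κ₁] [Fintype κ₂]
    (u₁ v₁ : κ₁ → ℝ) (u₂ v₂ : κ₂ → ℝ) :
    Sum.elim u₁ u₂ ⬝ᵥ Sum.elim v₁ v₂ = u₁ ⬝ᵥ v₁ + u₂ ⬝ᵥ v₂ := by
  simp [dotProduct, Fintype.sum_sum_type]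

section core

variable {M : Matrix ι ι ℝ} {b : OrthonormalBasis ι ℝ (EuclideanSpace ℝ ι)} {μ : ι → ℝ}

lemma repr_toE_mulVec (hM : M.IsHermitian) (hb : ∀ i, M *ᵥ ⇑(b i) = μ i • ⇑(b i))
    (x : EuclideanSpace ℝ ι) (i : ι) :
    b.repr (toE (M *ᵥ ⇑x)) i = μ i * b.repr x i := by
  have hMt : Mᵀ = M := by
    rw [← Matrix.conjTranspose_eq_transpose_of_trivial]; exact hM.eq
  rw [b.repr_apply_apply, b.repr_apply_apply, inner_eq_dot, inner_eq_dot]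
  have hcoe : ⇑(toE (M *ᵥ ⇑x)) = M *ᵥ ⇑x := rfl
  rw [hcoe, Matrix.dotProduct_mulVec]
  have hvm : ⇑(b i) ᵥ* M = M *ᵥ ⇑(b i) := by
    conv_lhs => rw [← hMt]
    rw [Matrix.vecMul_transpose]
  rw [hvm, hb i, smul_dotProduct]
  rfl

lemma inner_eq_sum_repr (x y : EuclideanSpace ℝ ι) :
    ⟪x, y⟫ = ∑ i, b.repr x i * b.repr y i := by
  rw [← b.repr.inner_map_map x y, inner_eq_dot]
  rfl

lemma repr_eq_zero_of_mem_span {F : Finset ι} {x : EuclideanSpace ℝ ι}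
    (hx : x ∈ Submodule.span ℝ (⇑b '' ↑F)) {i : ι} (hi : i ∉ F) :
    b.repr x i = 0 := by
  rw [← b.coe_toBasis] at hx
  have := (b.toBasis.mem_span_image).1 hx
  rw [← b.coe_toBasis_repr_apply]
  by_contra h
  exact hi (this (Finsupp.mem_support_iff.2 h))

lemma finrank_span_basis_image (F : Finset ι) :
    finrank ℝ (Submodule.span ℝ (⇑b '' ↑F)) = F.card := by
  have hli : LinearIndependent ℝ (fun i : (↑F : Set ι) => b i) :=
    (b.orthonormal.comp _ Subtype.val_injective).linearIndependent
  rw [Set.image_eq_range ⇑b (↑F : Set ι), finrank_span_eq_card hli]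
  simpa using Fintype.card_coe F

noncomputable def spanTop (b : OrthonormalBasis ι ℝ (EuclideanSpace ℝ ι)) (μ : ι → ℝ) (t : ℝ) :
    Submodule ℝ (EuclideanSpace ℝ ι) :=
  Submodule.span ℝ (⇑b '' ↑(Finset.univ.filter (fun i => t ≤ μ i)))

lemma finrank_spanTop (b : OrthonormalBasis ι ℝ (EuclideanSpace ℝ ι)) (μ : ι → ℝ) (t : ℝ) :
    finrank ℝ (spanTop b μ t) = Fintype.card {i // t ≤ μ i} := by
  rw [spanTop, finrank_span_basis_image, Fintype.card_subtype]

lemma quadA (hM : M.IsHermitian) (hb : ∀ i, M *ᵥ ⇑(b i) = μ i • ⇑(b i)) {t : ℝ} {x : EuclideanSpace ℝ ι}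
    (hx : x ∈ spanTop b μ t) :
    t * ⟪x, x⟫ ≤ ⟪x, toE (M *ᵥ ⇑x)⟫ := by
  rw [inner_eq_sum_repr (b := b) x x, inner_eq_sum_repr (b := b), Finset.mul_sum]
  refine Finset.sum_le_sum fun i _ => ?_
  rw [repr_toE_mulVec hM hb]
  by_cases hi : i ∈ Finset.univ.filter (fun i => t ≤ μ i)
  · have : t ≤ μ i := (Finset.mem_filter.1 hi).2
    nlinarith [mul_self_nonneg (b.repr x i)]
  · rw [repr_eq_zero_of_mem_span hx hi]; simp

lemma quadB (hM : M.IsHermitian) (hb : ∀ i, M *ᵥ ⇑(b i) = μ i • ⇑(b i)) {t : ℝ} (ht : 0 < t) {x : EuclideanSpace ℝ ι}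
    (hx : x ∈ spanTop b μ t) :
    t * ⟪x, toE (M *ᵥ ⇑x)⟫ ≤ ⟪toE (M *ᵥ ⇑x), toE (M *ᵥ ⇑x)⟫ := by
  rw [inner_eq_sum_repr (b := b), inner_eq_sum_repr (b := b), Finset.mul_sum]
  refine Finset.sum_le_sum fun i _ => ?_
  rw [repr_toE_mulVec hM hb]
  by_cases hi : i ∈ Finset.univ.filter (fun i => t ≤ μ i)
  · have h1 : t ≤ μ i := (Finset.mem_filter.1 hi).2
    nlinarith [mul_self_nonneg (b.repr x i)]
  · rw [repr_eq_zero_of_mem_span hx hi]; simp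

lemma finrank_le_count (hM : M.IsHermitian) (hb : ∀ i, M *ᵥ ⇑(b i) = μ i • ⇑(b i)) {t : ℝ}
    (V : Submodule ℝ (EuclideanSpace ℝ ι))
    (hV : ∀ x ∈ V, t * ⟪x, x⟫ ≤ ⟪x, toE (M *ᵥ ⇑x)⟫) :
    finrank ℝ V ≤ Fintype.card {i // t ≤ μ i} := by
  classical
  set F : Finset ι := Finset.univ.filter (fun i => ¬ t ≤ μ i) with hF
  have hdisj : Disjoint V (Submodule.span ℝ (⇑b '' ↑F)) := by
    rw [Submodule.disjoint_def]
    intro x hxV hxF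
    by_contra hx0
    have hform := hV x hxV
    have h1 : ⟪x, toE (M *ᵥ ⇑x)⟫ = ∑ i, μ i * (b.repr x i * b.repr x i) := by
      rw [inner_eq_sum_repr (b := b)]
      exact Finset.sum_congr rfl fun i _ => by rw [repr_toE_mulVec hM hb]; ring
    have h2 : ⟪x, x⟫ = ∑ i, b.repr x i * b.repr x i := inner_eq_sum_repr x x
    have hj : ∃ j, b.repr x j ≠ 0 := by
      by_contra h
      push_neg at h
      refine hx0 (b.repr.map_eq_zero_iff.1 ?_)
      ext j
      exact h j
    obtain ⟨j, hj⟩ := hj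
    have hjF : j ∈ F := by
      by_contra hjF
      exact hj (repr_eq_zero_of_mem_span hxF hjF)
    have hμj : μ j < t := not_le.1 (Finset.mem_filter.1 hjF).2
    have hstrict : ∑ i, μ i * (b.repr x i * b.repr x i) < ∑ i, t * (b.repr x i * b.repr x i) := by
      refine Finset.sum_lt_sum (fun i _ => ?_) ⟨j, Finset.mem_univ j, ?_⟩
      · by_cases hiF : i ∈ F
        · have : μ i < t := not_le.1 (Finset.mem_filter.1 hiF).2
          nlinarith [mul_self_nonneg (b.repr x i)]
        · rw [repr_eq_zero_of_mem_span hxF hiF]; simp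
      · have hpos : 0 < b.repr x j * b.repr x j := mul_self_pos.2 hj
        exact mul_lt_mul_of_pos_right hμj hpos
    rw [h1] at hform
    rw [h2, Finset.mul_sum] at hform
    linarith
  have hadd := Submodule.finrank_add_finrank_le_of_disjoint hdisj
  have hcard : Fintype.card {i // t ≤ μ i} + F.card = Fintype.card ι := by
    rw [Fintype.card_subtype, hF]
    simpa using Finset.card_filter_add_card_filter_not
      (s := (Finset.univ : Finset ι)) (p := fun i => t ≤ μ i)
  have hrk := finrank_span_basis_image (b := b) F
  have hE : finrank ℝ (EuclideanSpace ℝ ι) = Fintype.card ι := finrank_euclideanSpace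
  omega

/-- transfer of eigenvalue counts along a linear map -/
lemma count_le_count {ι₂ : Type*} [Fintype ι₂] [DecidableEq ι₂]
    {K : Matrix ι₂ ι₂ ℝ} {b' : OrthonormalBasis ι₂ ℝ (EuclideanSpace ℝ ι₂)} {ν : ι₂ → ℝ}
    (hK : K.IsHermitian) (hb' : ∀ i, K *ᵥ ⇑(b' i) = ν i • ⇑(b' i))
    (t' t : ℝ) (L : EuclideanSpace ℝ ι →ₗ[ℝ] EuclideanSpace ℝ ι₂)
    (hinj : ∀ x ∈ spanTop b μ t', L x = 0 → x = 0)
    (hform : ∀ x ∈ spanTop b μ t', t * ⟪L x, L x⟫ ≤ ⟪L x, toE (K *ᵥ ⇑(L x))⟫) :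
    Fintype.card {i // t' ≤ μ i} ≤ Fintype.card {i // t ≤ ν i} := by
  have h1 : finrank ℝ (spanTop b μ t') = Fintype.card {i // t' ≤ μ i} := finrank_spanTop b μ t'
  set V := spanTop b μ t' with hV
  have hres : Function.Injective (L.domRestrict V) := by
    intro a c h
    have h0 : L ((a : EuclideanSpace ℝ ι) - c) = 0 := by
      rw [map_sub]
      simpa [sub_eq_zero] using h
    exact Subtype.ext (sub_eq_zero.1 (hinj _ (V.sub_mem a.2 c.2) h0))
  have h2 : finrank ℝ (LinearMap.range (L.domRestrict V)) = finrank ℝ V :=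
    LinearMap.finrank_range_of_inj hres
  rw [LinearMap.range_domRestrict] at h2
  have h3 : finrank ℝ (V.map L) ≤ Fintype.card {i // t ≤ ν i} := by
    refine finrank_le_count hK hb' (V.map L) ?_
    rintro y ⟨x, hxV, rfl⟩
    exact hform x hxV
  omega

lemma count_eq_count {b' : OrthonormalBasis ι ℝ (EuclideanSpace ℝ ι)} {ν : ι → ℝ}
    (hM : M.IsHermitian) (hb : ∀ i, M *ᵥ ⇑(b i) = μ i • ⇑(b i))
    (hb' : ∀ i, M *ᵥ ⇑(b' i) = ν i • ⇑(b' i)) (t : ℝ) :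
    Fintype.card {i // t ≤ μ i} = Fintype.card {i // t ≤ ν i} := by
  refine le_antisymm ?_ ?_
  · refine count_le_count (b := b) hM hb' t t LinearMap.id (fun x _ h => by simpa using h) ?_
    intro x hx
    simpa using quadA hM hb hx
  · refine count_le_count (b := b') hM hb t t LinearMap.id (fun x _ h => by simpa using h) ?_
    intro x hx
    simpa using quadA hM hb' hx

end core

section apps

/-- the diagonal matrix is diagonalized by the standard basis -/
lemma diag_eigen (d : ι → ℝ) (i : ι) :
    (Matrix.diagonal d) *ᵥ ⇑((EuclideanSpace.basisFun ι ℝ) i)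
      = d i • ⇑((EuclideanSpace.basisFun ι ℝ) i) := by
  funext j
  simp [EuclideanSpace.basisFun_apply, Matrix.mulVec_diagonal,
    EuclideanSpace.single_apply, Pi.smul_apply, mul_ite]
  by_cases h : j = i <;> simp [h]

lemma count_herm_diag {d : ι → ℝ} {M : Matrix ι ι ℝ} (hM : M.IsHermitian)
    (hMd : M = Matrix.diagonal d) (t : ℝ) :
    Fintype.card {i // t ≤ hM.eigenvalues i} = Fintype.card {i // t ≤ d i} := by
  refine count_eq_count (b' := EuclideanSpace.basisFun ι ℝ) hM hM.mulVec_eigenvectorBasis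
    (fun i => by rw [hMd]; exact diag_eigen d i) t

/-- the sorted-eigenvalue/count bridge -/
lemma sorted_le_iff {N : ℕ} (μ : Fin N → ℝ) (j : ℕ) (hj : j < N) (t : ℝ) :
    t ≤ μ (Tuple.sort μ (Fin.rev ⟨j, hj⟩)) ↔ j < Fintype.card {i // t ≤ μ i} := by
  have hg : Antitone (fun k : Fin N => μ (Tuple.sort μ (Fin.rev k))) := by
    intro a c hac
    exact Tuple.monotone_sort μ (Fin.rev_le_rev.mpr hac)
  have hiff := Tuple.lt_card_ge_iff_apply_ge_of_antitone
    (f := fun k : Fin N => μ (Tuple.sort μ (Fin.rev k))) (a := t) hg (j := ⟨j, hj⟩)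
  rw [← Fintype.card_subtype] at hiff
  have hcard : Fintype.card {i // t ≤ μ (Tuple.sort μ (Fin.rev i))}
      = Fintype.card {i // t ≤ μ i} :=
    Fintype.card_congr (Equiv.subtypeEquiv (Fin.revPerm.trans (Tuple.sort μ))
      (fun i => by simp [Fin.revPerm]))
  rw [hcard] at hiff
  exact hiff.symm

lemma dot_conjTranspose_mulVec {κ ρ : Type*} [Fintype κ] [Fintype ρ]
    (M : Matrix ρ κ ℝ) (v : κ → ℝ) (w : ρ → ℝ) :
    v ⬝ᵥ (Mᴴ *ᵥ w) = (M *ᵥ v) ⬝ᵥ w := by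
  rw [Matrix.dotProduct_mulVec,
    show Mᴴ = Mᵀ from Matrix.conjTranspose_eq_transpose_of_trivial M,
    Matrix.vecMul_transpose]

lemma dot_mulVec_eq {κ ρ : Type*} [Fintype κ] [Fintype ρ]
    (M : Matrix ρ κ ℝ) (v : ρ → ℝ) (w : κ → ℝ) :
    v ⬝ᵥ (M *ᵥ w) = (Mᴴ *ᵥ v) ⬝ᵥ w := by
  rw [Matrix.dotProduct_mulVec]
  congr 1
  rw [show Mᴴ = Mᵀ from Matrix.conjTranspose_eq_transpose_of_trivial M,
    ← Matrix.vecMul_transpose, Matrix.transpose_transpose]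

lemma inner_toE_right (x : EuclideanSpace ℝ ι) (v : ι → ℝ) :
    ⟪x, toE v⟫ = (⇑x) ⬝ᵥ v := by
  rw [inner_eq_dot]
  rfl

/-- the dilation linear map `x ↦ (t⁻¹ W x, x)` -/
noncomputable def dilL {m n : ℕ} (W : Matrix (Fin m) (Fin n) ℝ) (t : ℝ) :
    EuclideanSpace ℝ (Fin n) →ₗ[ℝ] EuclideanSpace ℝ (Fin m ⊕ Fin n) where
  toFun x := toE (Sum.elim (t⁻¹ • (W *ᵥ ⇑x)) ⇑x)
  map_add' x y := by
    ext (i | i) <;>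
      simp [toE, Matrix.mulVec_add, mul_add]
  map_smul' c x := by
    ext (i | i) <;>
      simp [toE, Matrix.mulVec_smul, smul_eq_mul] <;> ring

@[simp] lemma dilL_coe {m n : ℕ} (W : Matrix (Fin m) (Fin n) ℝ) (t : ℝ)
    (x : EuclideanSpace ℝ (Fin n)) :
    ⇑(dilL W t x) = Sum.elim (t⁻¹ • (W *ᵥ ⇑x)) ⇑x := rfl

/-- the multiplication linear map `x ↦ C x` -/
noncomputable def mulVecLE {κ ρ : Type*} [Fintype κ] [Fintype ρ] (C : Matrix ρ κ ℝ) :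
    EuclideanSpace ℝ κ →ₗ[ℝ] EuclideanSpace ℝ ρ where
  toFun x := toE (C *ᵥ ⇑x)
  map_add' x y := by
    ext i
    simp [toE, Matrix.mulVec_add]
  map_smul' c x := by
    ext i
    simp [toE, Matrix.mulVec_smul]

@[simp] lemma mulVecLE_coe {κ ρ : Type*} [Fintype κ] [Fintype ρ] (C : Matrix ρ κ ℝ)
    (x : EuclideanSpace ℝ κ) : ⇑(mulVecLE C x) = C *ᵥ ⇑x := rfl

/-- Step 2: counts for `CᴴC` are dominated by counts for `CCᴴ`. -/
lemma step2 {κ ρ : Type*} [Fintype κ] [DecidableEq κ] [Fintype ρ] [DecidableEq ρ]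
    (C : Matrix ρ κ ℝ) {t : ℝ} (ht : 0 < t) :
    Fintype.card {i // t ≤ (Matrix.isHermitian_conjTranspose_mul_self C).eigenvalues i}
      ≤ Fintype.card {i // t ≤ (Matrix.isHermitian_mul_conjTranspose_self C).eigenvalues i} := by
  set hM := Matrix.isHermitian_conjTranspose_mul_self C
  set hK := Matrix.isHermitian_mul_conjTranspose_self C
  have hMx : ∀ x : EuclideanSpace ℝ κ, (Cᴴ * C) *ᵥ ⇑x = Cᴴ *ᵥ (C *ᵥ ⇑x) := by
    intro x
    simp [Matrix.mulVec_mulVec]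
  refine count_le_count (b := hM.eigenvectorBasis) (μ := hM.eigenvalues)
    hK hK.mulVec_eigenvectorBasis t t (mulVecLE C) ?_ ?_
  · intro x hx h0
    have hq := quadA hM hM.mulVec_eigenvectorBasis hx
    have hC0 : C *ᵥ ⇑x = 0 := by
      have := congrArg (fun z : EuclideanSpace ℝ ρ => (⇑z : ρ → ℝ)) h0
      simpa using this
    have hz : ⟪x, toE ((Cᴴ * C) *ᵥ ⇑x)⟫ = 0 := by
      rw [inner_toE_right, hMx, Matrix.dotProduct_mulVec,
        show Cᴴ = Cᵀ from Matrix.conjTranspose_eq_transpose_of_trivial C, hC0]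
      simp
    rw [hz] at hq
    have hxx : (0:ℝ) ≤ ⟪x, x⟫ := real_inner_self_nonneg
    have : ⟪x, x⟫ ≤ 0 := by nlinarith
    exact real_inner_self_nonpos.1 this
  · intro x hx
    have hq := quadB hM hM.mulVec_eigenvectorBasis ht hx
    have e1 : ⟪mulVecLE C x, mulVecLE C x⟫ = ⟪x, toE ((Cᴴ * C) *ᵥ ⇑x)⟫ := by
      rw [inner_eq_dot, inner_toE_right, mulVecLE_coe, hMx, ← dot_conjTranspose_mulVec]
    have e2 : ⟪mulVecLE C x, toE ((C * Cᴴ) *ᵥ ⇑(mulVecLE C x))⟫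
        = ⟪toE ((Cᴴ * C) *ᵥ ⇑x), toE ((Cᴴ * C) *ᵥ ⇑x)⟫ := by
      rw [inner_toE_right, mulVecLE_coe, inner_eq_dot]
      have hc : ⇑(toE ((Cᴴ * C) *ᵥ ⇑x)) = Cᴴ *ᵥ (C *ᵥ ⇑x) := by
        rw [show ⇑(toE ((Cᴴ * C) *ᵥ ⇑x)) = (Cᴴ * C) *ᵥ ⇑x from rfl, hMx]
      rw [hc]
      have h5 : (C * Cᴴ) *ᵥ (C *ᵥ ⇑x) = C *ᵥ (Cᴴ *ᵥ (C *ᵥ ⇑x)) := by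
        simp [Matrix.mulVec_mulVec, Matrix.mul_assoc]
      rw [h5, dot_mulVec_eq]
    rw [e1, e2]
    exact hq

/-- Step 1: counts for `WᴴW` (at `t²`) are dominated by counts for `CᴴC` (at `t`),
where `W = 2 A'ᵀ B'` and `C = [A' B']`. -/
lemma step1 {r m n : ℕ} (W2 : Matrix (Fin m) (Fin n) ℝ)
    (A' : Matrix (Fin r) (Fin m) ℝ) (B' : Matrix (Fin r) (Fin n) ℝ)
    (hW2 : A'ᵀ * B' = W2) {t : ℝ} (ht : 0 < t) :
    Fintype.card
        {i // t^2 ≤ (Matrix.isHermitian_conjTranspose_mul_self ((2:ℝ) • W2)).eigenvalues i}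
      ≤ Fintype.card
        {i // t ≤ (Matrix.isHermitian_conjTranspose_mul_self
            (Matrix.fromCols A' B')).eigenvalues i} := by
  set W : Matrix (Fin m) (Fin n) ℝ := (2:ℝ) • W2 with hW
  set C : Matrix (Fin r) (Fin m ⊕ Fin n) ℝ := Matrix.fromCols A' B' with hC
  set hM := Matrix.isHermitian_conjTranspose_mul_self W
  set hK := Matrix.isHermitian_conjTranspose_mul_self C
  refine count_le_count (b := hM.eigenvectorBasis) (μ := hM.eigenvalues)
    hK hK.mulVec_eigenvectorBasis (t^2) t (dilL W t) ?_ ?_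
  · intro x hx h0
    ext i
    have := congrArg (fun z : EuclideanSpace ℝ (Fin m ⊕ Fin n) => (⇑z) (Sum.inr i)) h0
    simpa using this
  · intro x hx
    have hq := quadA hM hM.mulVec_eigenvectorBasis hx
    set v : Fin n → ℝ := ⇑x with hv
    set z : Fin m → ℝ := W2 *ᵥ v with hz
    set u : Fin m → ℝ := t⁻¹ • (W *ᵥ v) with hu
    have f1 : ⟪x, toE ((Wᴴ * W) *ᵥ ⇑x)⟫ = (W *ᵥ v) ⬝ᵥ (W *ᵥ v) := by
      rw [inner_toE_right,
        show (Wᴴ * W) *ᵥ ⇑x = Wᴴ *ᵥ (W *ᵥ ⇑x) by simp [Matrix.mulVec_mulVec],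
        dot_conjTranspose_mulVec]
    have f2 : ⟪x, x⟫ = v ⬝ᵥ v := inner_eq_dot x x
    have g6 : W *ᵥ v = (2:ℝ) • z := by
      rw [hW, Matrix.smul_mulVec, hz]
    have g1 : ⟪dilL W t x, dilL W t x⟫ = u ⬝ᵥ u + v ⬝ᵥ v := by
      rw [inner_eq_dot, dilL_coe, dot_sumElim]
    have g2 : ⟪dilL W t x, toE ((Cᴴ * C) *ᵥ ⇑(dilL W t x))⟫
        = (C *ᵥ Sum.elim u v) ⬝ᵥ (C *ᵥ Sum.elim u v) := by
      rw [inner_toE_right, dilL_coe,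
        show (Cᴴ * C) *ᵥ Sum.elim u v = Cᴴ *ᵥ (C *ᵥ Sum.elim u v) by
          simp [Matrix.mulVec_mulVec],
        dot_conjTranspose_mulVec]
    have g3 : C *ᵥ Sum.elim u v = A' *ᵥ u + B' *ᵥ v := by
      rw [hC, Matrix.fromCols_mulVec_sumElim]
    set p : Fin r → ℝ := A' *ᵥ u with hp
    set q : Fin r → ℝ := B' *ᵥ v with hqq
    have g4 : (p + q) ⬝ᵥ (p + q) = (p - q) ⬝ᵥ (p - q) + 4 * (p ⬝ᵥ q) := by
      simp only [add_dotProduct, dotProduct_add, sub_dotProduct,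
        dotProduct_sub, dotProduct_comm q p]
      ring
    have g5 : p ⬝ᵥ q = u ⬝ᵥ z := by
      have h := dot_mulVec_eq A'ᴴ u q
      rw [Matrix.conjTranspose_conjTranspose] at h
      rw [hp, ← h, hqq,
        show A'ᴴ *ᵥ (B' *ᵥ v) = (A'ᴴ * B') *ᵥ v by simp [Matrix.mulVec_mulVec],
        show A'ᴴ = A'ᵀ from Matrix.conjTranspose_eq_transpose_of_trivial A', hW2, hz]
    have hu_dot : u ⬝ᵥ u = (t⁻¹ * 2) * ((t⁻¹ * 2) * (z ⬝ᵥ z)) := by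
      rw [hu, g6, smul_smul, smul_dotProduct, dotProduct_smul,
        smul_eq_mul, smul_eq_mul]
    have huz : u ⬝ᵥ z = (t⁻¹ * 2) * (z ⬝ᵥ z) := by
      rw [hu, g6, smul_smul, smul_dotProduct, smul_eq_mul]
    have hWv : (W *ᵥ v) ⬝ᵥ (W *ᵥ v) = 4 * (z ⬝ᵥ z) := by
      rw [g6, smul_dotProduct, dotProduct_smul, smul_eq_mul, smul_eq_mul]
      ring
    rw [f1, f2, hWv] at hq
    rw [g1, g2, g3, g4, g5, hu_dot, huz]
    have hd : (0:ℝ) ≤ (p - q) ⬝ᵥ (p - q) := dot_self_nonneg _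
    have ha : (0:ℝ) ≤ z ⬝ᵥ z := dot_self_nonneg _
    have hg : (0:ℝ) ≤ v ⬝ᵥ v := dot_self_nonneg _
    set a : ℝ := z ⬝ᵥ z
    set g : ℝ := v ⬝ᵥ v
    have h1 : t * ((t⁻¹ * 2) * ((t⁻¹ * 2) * a)) = 4 * (t⁻¹ * a) := by
      field_simp
      ring
    have h2 : t * g ≤ 4 * (t⁻¹ * a) := by
      have hmul := mul_le_mul_of_nonneg_left hq (inv_nonneg.mpr ht.le)
      calc t * g = t⁻¹ * (t^2 * g) := by field_simp
        _ ≤ t⁻¹ * (4 * a) := hmul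
        _ = 4 * (t⁻¹ * a) := by ring
    have h3 : t * ((t⁻¹ * 2) * ((t⁻¹ * 2) * a) + g)
        = t * ((t⁻¹ * 2) * ((t⁻¹ * 2) * a)) + t * g := by ring
    linarith

end apps

end NBAux


open NBAux in
lemma sval_nonneg' {m n : ℕ} (W : Matrix (Fin m) (Fin n) ℝ) (j : ℕ) : 0 ≤ sval W j := by
  unfold sval
  split
  · exact Real.sqrt_nonneg _
  · exact le_refl 0

/-- NB-LoRA II parameterization stays in the set `𝕎_S`: if `A Aᵀ + B Bᵀ = I` (i.e. the
stacked matrix `[A B]` has orthonormal rows) and `S = diag s` with `s > 0`, then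
`W = 2 Aᵀ S B` has rank at most `r` and `σⱼ(W) ≤ σⱼ(S)` for all `j`. -/
theorem stmt_8 (r m n : ℕ) (s : Fin r → ℝ) (hs : ∀ j, 0 < s j)
    (A : Matrix (Fin r) (Fin m) ℝ) (B : Matrix (Fin r) (Fin n) ℝ)
    (horth : A * Aᵀ + B * Bᵀ = 1) :
    ((2 : ℝ) • (Aᵀ * Matrix.diagonal s * B)).rank ≤ r ∧
    ∀ j : ℕ, sval ((2 : ℝ) • (Aᵀ * Matrix.diagonal s * B)) j ≤ sval (Matrix.diagonal s) j := by
  constructor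
  · have h2 : (2:ℝ) • (Aᵀ * Matrix.diagonal s * B)
        = Aᵀ * ((2:ℝ) • (Matrix.diagonal s * B)) := by
      rw [Matrix.mul_smul, Matrix.mul_assoc]
    rw [h2]
    exact le_trans (Matrix.rank_mul_le_left _ _) (by simpa using Matrix.rank_le_width Aᵀ)
  · intro j
    classical
    set W2 : Matrix (Fin m) (Fin n) ℝ := Aᵀ * Matrix.diagonal s * B with hW2def
    set sqs : Fin r → ℝ := fun i => Real.sqrt (s i) with hsqs
    set A' : Matrix (Fin r) (Fin m) ℝ := Matrix.diagonal sqs * A with hA'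
    set B' : Matrix (Fin r) (Fin n) ℝ := Matrix.diagonal sqs * B with hB'
    have hdd : Matrix.diagonal sqs * Matrix.diagonal sqs = Matrix.diagonal s := by
      rw [Matrix.diagonal_mul_diagonal]
      exact congrArg Matrix.diagonal (funext fun i => Real.mul_self_sqrt (hs i).le)
    have hW2 : A'ᵀ * B' = W2 := by
      rw [hA', hB', Matrix.transpose_mul, Matrix.diagonal_transpose, hW2def]
      calc Aᵀ * Matrix.diagonal sqs * (Matrix.diagonal sqs * B)
          = Aᵀ * (Matrix.diagonal sqs * Matrix.diagonal sqs) * B := by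
            simp only [Matrix.mul_assoc]
        _ = Aᵀ * Matrix.diagonal s * B := by rw [hdd]
    set C : Matrix (Fin r) (Fin m ⊕ Fin n) ℝ := Matrix.fromCols A' B' with hCdef
    have hDH : (Matrix.diagonal sqs)ᴴ = Matrix.diagonal sqs := by
      rw [Matrix.conjTranspose_eq_transpose_of_trivial, Matrix.diagonal_transpose]
    have hCC : C * Cᴴ = Matrix.diagonal s := by
      rw [hCdef, Matrix.conjTranspose_fromCols_eq_fromRows_conjTranspose,
        Matrix.fromCols_mul_fromRows, hA', hB', Matrix.conjTranspose_mul,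
        Matrix.conjTranspose_mul, hDH, Matrix.conjTranspose_eq_transpose_of_trivial A,
        Matrix.conjTranspose_eq_transpose_of_trivial B]
      have expand : Matrix.diagonal sqs * A * (Aᵀ * Matrix.diagonal sqs)
            + Matrix.diagonal sqs * B * (Bᵀ * Matrix.diagonal sqs)
          = Matrix.diagonal sqs * (A * Aᵀ + B * Bᵀ) * Matrix.diagonal sqs := by
        simp only [Matrix.mul_add, Matrix.add_mul, Matrix.mul_assoc]
      rw [expand, horth, Matrix.mul_one, hdd]
    have hSS : (Matrix.diagonal s)ᴴ * Matrix.diagonal s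
        = Matrix.diagonal (fun i => s i * s i) := by
      rw [Matrix.conjTranspose_eq_transpose_of_trivial, Matrix.diagonal_transpose,
        Matrix.diagonal_mul_diagonal]
    by_cases hjn : j < n
    · -- main case
      have hLHS : sval ((2:ℝ) • W2) j
          = Real.sqrt ((Matrix.isHermitian_conjTranspose_mul_self ((2:ℝ) • W2)).eigenvalues
              (Tuple.sort (Matrix.isHermitian_conjTranspose_mul_self ((2:ℝ) • W2)).eigenvalues
                (Fin.rev ⟨j, hjn⟩))) := by
        rw [sval, dif_pos hjn]
      set u : ℝ := (Matrix.isHermitian_conjTranspose_mul_self ((2:ℝ) • W2)).eigenvalues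
          (Tuple.sort (Matrix.isHermitian_conjTranspose_mul_self ((2:ℝ) • W2)).eigenvalues
            (Fin.rev ⟨j, hjn⟩)) with hudef
      by_cases hupos : 0 < u
      · set t : ℝ := Real.sqrt u with htdef
        have ht : 0 < t := Real.sqrt_pos.2 hupos
        have ht2 : t^2 = u := Real.sq_sqrt hupos.le
        have hbridge1 : j < Fintype.card
            {i // t^2 ≤ (Matrix.isHermitian_conjTranspose_mul_self ((2:ℝ) • W2)).eigenvalues i} := by
          have h0 := (NBAux.sorted_le_iff
            ((Matrix.isHermitian_conjTranspose_mul_self ((2:ℝ) • W2)).eigenvalues) j hjn u).1 le_rfl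
          rw [← ht2] at h0
          exact h0
        have h2 := NBAux.step1 W2 A' B' hW2 ht
        have h3 := NBAux.step2 C ht
        have h4 := NBAux.count_herm_diag (Matrix.isHermitian_mul_conjTranspose_self C) hCC t
        have h5 : Fintype.card {i // t ≤ s i}
            = Fintype.card {i // t^2 ≤ s i * s i} := by
          refine Fintype.card_congr (Equiv.subtypeEquivRight fun i => ?_)
          constructor
          · intro h
            nlinarith [hs i, ht]
          · intro h
            nlinarith [hs i, ht]
        have h6 := NBAux.count_herm_diag
          (Matrix.isHermitian_conjTranspose_mul_self (Matrix.diagonal s)) hSS (t^2)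
        have hjS : j < Fintype.card
            {i // t^2 ≤ (Matrix.isHermitian_conjTranspose_mul_self
                (Matrix.diagonal s)).eigenvalues i} :=
          lt_of_lt_of_le hbridge1
            (le_trans h2 (le_trans h3 (le_of_eq (h4.trans (h5.trans h6.symm)))))
        have hjr : j < r := by
          have hle := Fintype.card_subtype_le
            (fun i : Fin r => t^2 ≤ (Matrix.isHermitian_conjTranspose_mul_self
              (Matrix.diagonal s)).eigenvalues i)
          have := lt_of_lt_of_le hjS hle
          simpa using this
        have hbridge2 : t^2 ≤ (Matrix.isHermitian_conjTranspose_mul_self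
            (Matrix.diagonal s)).eigenvalues
              (Tuple.sort (Matrix.isHermitian_conjTranspose_mul_self
                (Matrix.diagonal s)).eigenvalues (Fin.rev ⟨j, hjr⟩)) :=
          (NBAux.sorted_le_iff _ j hjr (t^2)).2 hjS
        have hRHS : sval (Matrix.diagonal s) j
            = Real.sqrt ((Matrix.isHermitian_conjTranspose_mul_self
                (Matrix.diagonal s)).eigenvalues
                  (Tuple.sort (Matrix.isHermitian_conjTranspose_mul_self
                    (Matrix.diagonal s)).eigenvalues (Fin.rev ⟨j, hjr⟩))) := by
          rw [sval, dif_pos hjr]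
        rw [hLHS, hRHS]
        apply Real.sqrt_le_sqrt
        rw [← ht2]
        exact hbridge2
      · rw [hLHS]
        have hz : Real.sqrt u = 0 := Real.sqrt_eq_zero_of_nonpos (not_lt.1 hupos)
        rw [hz]
        exact sval_nonneg' _ _
    · rw [sval, dif_neg hjn]
      exact sval_nonneg' _ _
end

section
/- Completeness of NB-LoRA I: let U ∈ ℝ^{m×r} and V ∈ ℝ^{n×r} have orthonormal columns, and D = diag(d̂) with |d̂_j| ≤ s_j. Then W = U D Vᵀ satisfies σ_j(W) ≤ σ_j(diag(s)) for all j. Conversely, for any W ∈ ℝ^{m×n} with rank(W) ≤ r and σ_j(W) ≤ s_j for the decreasing arrangement s_1 ≥ ... ≥ s_r > 0, there exist U, V with orthonormal columns and a diagonal D with |D_{jj}| ≤ s_j such that W = U D Vᵀ. -/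
open Matrix

section NBLoRAHelpers

open Matrix Polynomial Finset

noncomputable section NBAux

/-- descending sort of a tuple -/
noncomputable def dsort {N : ℕ} (f : Fin N → ℝ) (j : Fin N) : ℝ :=
  f (Tuple.sort f j.rev)

/-- number of entries ≥ a -/
noncomputable def cnt {N : ℕ} (f : Fin N → ℝ) (a : ℝ) : ℕ :=
  Fintype.card {i // a ≤ f i}

lemma antitone_dsort {N : ℕ} (f : Fin N → ℝ) : Antitone (dsort f) := by
  intro i j hij
  exact Tuple.monotone_sort f (by simpa using Fin.rev_le_rev.mpr hij)

lemma cnt_dsort {N : ℕ} (f : Fin N → ℝ) (a : ℝ) : cnt (dsort f) a = cnt f a := by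
  refine Fintype.card_congr (Equiv.subtypeEquiv (Fin.revPerm.trans (Tuple.sort f)) ?_)
  intro i
  exact Iff.rfl

lemma le_dsort_iff {N : ℕ} (f : Fin N → ℝ) (j : Fin N) (a : ℝ) :
    a ≤ dsort f j ↔ (j : ℕ) < cnt f a := by
  rw [← cnt_dsort f a, cnt, Fintype.card_subtype]
  exact (Tuple.lt_card_ge_iff_apply_ge_of_antitone (antitone_dsort f)).symm

lemma dsort_le_dsort {N N' : ℕ} (f : Fin N → ℝ) (f' : Fin N' → ℝ) (j : Fin N) (j' : Fin N')
    (hj : (j : ℕ) = (j' : ℕ)) (h0 : ∀ i, 0 ≤ f' i)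
    (hc : ∀ a, 0 < a → cnt f a ≤ cnt f' a) : dsort f j ≤ dsort f' j' := by
  rcases le_or_gt (dsort f j) 0 with h | h
  · exact h.trans (h0 _)
  · have h1 : (j : ℕ) < cnt f (dsort f j) := (le_dsort_iff f j _).mp le_rfl
    have h2 : (j' : ℕ) < cnt f' (dsort f j) := by have := hc _ h; omega
    exact (le_dsort_iff f' j' _).mpr h2

lemma dsort_nonpos {N : ℕ} (f : Fin N → ℝ) (j : Fin N)
    (hj : Fintype.card {i // 0 < f i} ≤ (j : ℕ)) : dsort f j ≤ 0 := by
  by_contra h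
  push_neg at h
  have h1 : (j : ℕ) < cnt f (dsort f j) := (le_dsort_iff f j _).mp le_rfl
  have h2 : cnt f (dsort f j) ≤ Fintype.card {i // 0 < f i} :=
    Fintype.card_subtype_mono _ _ (fun i hi => lt_of_lt_of_le h hi)
  omega

end NBAux
open Matrix Polynomial Finset

lemma charpoly_conj_orth {N : ℕ} (Q B : Matrix (Fin N) (Fin N) ℝ) (hQ : Qᵀ * Q = 1) :
    (Q * B * Qᵀ).charpoly = B.charpoly := by
  have hQ' : Q * Qᵀ = 1 := mul_eq_one_comm.mp hQ
  have h1 : (Qᵀ).map (C : ℝ →+* ℝ[X]) * Q.map C = 1 := by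
    rw [← Matrix.map_mul, hQ]; simp
  have h2 : Q.map (C : ℝ →+* ℝ[X]) * (Qᵀ).map C = 1 := by
    rw [← Matrix.map_mul, hQ']; simp
  have key : charmatrix (Q * B * Qᵀ) = Q.map C * charmatrix B * (Qᵀ).map C := by
    rw [charmatrix, charmatrix, mul_sub, sub_mul]
    congr 1
    · have hc : Commute ((Matrix.scalar (Fin N)) (X : ℝ[X])) (Q.map C) :=
        scalar_commute _ (fun r' => Commute.all _ _) _
      calc (Matrix.scalar (Fin N)) (X : ℝ[X])
          = (Matrix.scalar (Fin N)) (X : ℝ[X]) * (Q.map C * (Qᵀ).map C) := by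
            rw [h2, Matrix.mul_one]
        _ = Q.map C * (Matrix.scalar (Fin N)) (X : ℝ[X]) * (Qᵀ).map C := by
            rw [← Matrix.mul_assoc, hc.eq]
    · simp only [RingHom.mapMatrix_apply, Matrix.map_mul]
  rw [Matrix.charpoly, key, det_mul, det_mul, Matrix.charpoly, mul_comm, ← mul_assoc, ← det_mul,
    h1, det_one, one_mul]

lemma charpoly_diagonal_real {N : ℕ} (c : Fin N → ℝ) :
    (Matrix.diagonal c).charpoly = ∏ i, (X - C (c i)) := by
  rw [Matrix.charpoly]
  have : charmatrix (Matrix.diagonal c) = Matrix.diagonal (fun i => X - C (c i)) := by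
    ext i j
    by_cases h : i = j
    · subst h; simp [charmatrix_apply_eq]
    · simp [charmatrix_apply_ne _ _ _ h, Matrix.diagonal_apply_ne _ h]
  rw [this, det_diagonal]

/-- matrix with columns a given family of Euclidean vectors -/
def colMat {N k : ℕ} (w : Fin k → EuclideanSpace ℝ (Fin N)) : Matrix (Fin N) (Fin k) ℝ :=
  Matrix.of fun i j => w j i

lemma colMat_orth {N k : ℕ} (w : Fin k → EuclideanSpace ℝ (Fin N)) (hw : Orthonormal ℝ w) :
    (colMat w)ᵀ * colMat w = 1 := by
  rw [orthonormal_iff_ite] at hw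
  ext a b
  have h := hw a b
  rw [PiLp.inner_apply] at h
  simpa [Matrix.mul_apply, colMat, Matrix.one_apply, mul_comm] using h

lemma spectral_real {N : ℕ} {A : Matrix (Fin N) (Fin N) ℝ} (hA : A.IsHermitian) :
    ∃ Q₀ : Matrix (Fin N) (Fin N) ℝ,
      Q₀ᵀ * Q₀ = 1 ∧ A = Q₀ * Matrix.diagonal hA.eigenvalues * Q₀ᵀ := by
  set Q₀ := colMat (fun l => hA.eigenvectorBasis l) with hQdef
  have horth : Q₀ᵀ * Q₀ = 1 := colMat_orth _ hA.eigenvectorBasis.orthonormal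
  refine ⟨Q₀, horth, ?_⟩
  have horth' : Q₀ * Q₀ᵀ = 1 := mul_eq_one_comm.mp horth
  have hAQ : A * Q₀ = Q₀ * Matrix.diagonal hA.eigenvalues := by
    ext i l
    have h := congrFun (hA.mulVec_eigenvectorBasis l) i
    simp only [Matrix.mulVec, dotProduct, Pi.smul_apply, smul_eq_mul] at h
    rw [Matrix.mul_diagonal]
    simpa [Matrix.mul_apply, colMat, hQdef, mul_comm] using h
  calc A = A * (Q₀ * Q₀ᵀ) := by rw [horth', Matrix.mul_one]
  _ = (A * Q₀) * Q₀ᵀ := by rw [Matrix.mul_assoc]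
  _ = Q₀ * Matrix.diagonal hA.eigenvalues * Q₀ᵀ := by rw [hAQ]

lemma eig_multiset {N : ℕ} {A : Matrix (Fin N) (Fin N) ℝ} (hA : A.IsHermitian)
    (Q : Matrix (Fin N) (Fin N) ℝ) (c : Fin N → ℝ) (hQ : Qᵀ * Q = 1)
    (hAQ : A = Q * Matrix.diagonal c * Qᵀ) :
    Multiset.map hA.eigenvalues Finset.univ.val = Multiset.map c Finset.univ.val := by
  obtain ⟨Q₀, hQ₀, hA₀⟩ := spectral_real hA
  have h1 : A.charpoly = ∏ i, (X - C (hA.eigenvalues i)) := by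
    conv_lhs => rw [hA₀]
    rw [charpoly_conj_orth _ _ hQ₀, charpoly_diagonal_real]
  have h2 : A.charpoly = ∏ i, (X - C (c i)) := by
    conv_lhs => rw [hAQ]
    rw [charpoly_conj_orth _ _ hQ, charpoly_diagonal_real]
  have e1 : ((Finset.univ.val.map hA.eigenvalues).map (fun a => X - C a)).prod
      = ((Finset.univ.val.map c).map (fun a => X - C a)).prod := by
    rw [Multiset.map_map, Multiset.map_map, ← Finset.prod_eq_multiset_prod,
      ← Finset.prod_eq_multiset_prod]
    simp only [Function.comp]
    rw [← h1, ← h2]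
  have h3 := congrArg Polynomial.roots e1
  rwa [Polynomial.roots_multiset_prod_X_sub_C, Polynomial.roots_multiset_prod_X_sub_C] at h3

/-- pad a tuple with zeros -/
noncomputable def padf {N k : ℕ} (hk : k ≤ N) (c : Fin k → ℝ) : Fin N → ℝ :=
  fun l => if h : (l : ℕ) < k then c ⟨l, h⟩ else 0

lemma padf_castLE {N k : ℕ} (hk : k ≤ N) (c : Fin k → ℝ) (j : Fin k) :
    padf hk c (Fin.castLE hk j) = c j := by
  simp [padf, j.2]

lemma padf_zero {N k : ℕ} (hk : k ≤ N) (c : Fin k → ℝ) (l : Fin N) (hl : k ≤ (l : ℕ)) :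
    padf hk c l = 0 := dif_neg (not_lt.mpr hl)

noncomputable def cnt' {N : ℕ} (f : Fin N → ℝ) (a : ℝ) : ℕ := Fintype.card {i // a ≤ f i}

lemma card_subtype_countP {N : ℕ} (f : Fin N → ℝ) (p : ℝ → Prop) [DecidablePred p] :
    Fintype.card {i // p (f i)} = Multiset.countP p (Multiset.map f Finset.univ.val) := by
  rw [Fintype.card_subtype, Multiset.countP_map]
  rfl

lemma card_padf {N k : ℕ} (hk : k ≤ N) (c : Fin k → ℝ) (p : ℝ → Prop) [DecidablePred p]
    (hp0 : ¬ p 0) : Fintype.card {l : Fin N // p (padf hk c l)}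
      = Fintype.card {j : Fin k // p (c j)} := by
  refine Fintype.card_congr ?_
  refine ⟨fun x => ⟨⟨(x : Fin N), ?_⟩, ?_⟩, fun y => ⟨Fin.castLE hk y, ?_⟩, ?_, ?_⟩
  · by_contra h
    exact hp0 (padf_zero hk c _ (not_lt.mp h) ▸ x.2)
  · have h : ((x : Fin N) : ℕ) < k := by
      by_contra h
      exact hp0 (padf_zero hk c _ (not_lt.mp h) ▸ x.2)
    have := x.2
    rwa [show padf hk c (x : Fin N) = c ⟨(x : Fin N), h⟩ from dif_pos h] at this
  · rw [padf_castLE]; exact y.2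
  · intro x; apply Subtype.ext; apply Fin.ext; rfl
  · intro y; apply Subtype.ext; apply Fin.ext; rfl

lemma sum_fin_castLE {N k : ℕ} (hk : k ≤ N) (F : Fin N → ℝ)
    (hF : ∀ l : Fin N, k ≤ (l : ℕ) → F l = 0) :
    ∑ l, F l = ∑ j : Fin k, F (Fin.castLE hk j) := by
  have hmap := Finset.sum_map Finset.univ (Fin.castLEEmb hk) F
  simp only [Fin.coe_castLEEmb] at hmap
  rw [← hmap]
  refine (Finset.sum_subset (Finset.subset_univ _) ?_).symm
  intro x _ hx
  refine hF x ?_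
  by_contra h
  exact hx (Finset.mem_map.mpr ⟨⟨(x : ℕ), not_le.mp h⟩, Finset.mem_univ _, Fin.ext rfl⟩)

lemma colMat_orth' {N k : ℕ} (w : Fin k → EuclideanSpace ℝ (Fin N))
    (h : (colMat w)ᵀ * colMat w = 1) : Orthonormal ℝ w := by
  rw [orthonormal_iff_ite]
  intro a b
  have he := congrFun (congrFun h a) b
  rw [PiLp.inner_apply]
  simpa [Matrix.mul_apply, colMat, Matrix.one_apply, mul_comm] using he

lemma extend_orthonormal'' {N k : ℕ} (hk : k ≤ N) (w : Fin k → EuclideanSpace ℝ (Fin N))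
    (P : Fin k → Prop) [DecidablePred P]
    (hw : Orthonormal ℝ (fun j : {j // P j} => w j.1)) :
    ∃ b : Fin N → EuclideanSpace ℝ (Fin N), Orthonormal ℝ b ∧
      ∀ j, P j → b (Fin.castLE hk j) = w j := by
  have card : Module.finrank ℝ (EuclideanSpace ℝ (Fin N)) = Fintype.card (Fin N) := by simp
  classical
  set v : Fin N → EuclideanSpace ℝ (Fin N) :=
    fun i => if h : (i : ℕ) < k then w ⟨i, h⟩ else 0 with hv_def
  set s : Set (Fin N) := {i | ∃ h : (i : ℕ) < k, P ⟨i, h⟩} with hs_def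
  have hv : Orthonormal ℝ (s.restrict v) := by
    rw [orthonormal_iff_ite] at hw ⊢
    rintro ⟨a, ha1, ha2⟩ ⟨b, hb1, hb2⟩
    have h := hw ⟨⟨a, ha1⟩, ha2⟩ ⟨⟨b, hb1⟩, hb2⟩
    have hva : s.restrict v ⟨a, ha1, ha2⟩ = w ⟨a, ha1⟩ := by
      show (if h : (a : ℕ) < k then w ⟨a, h⟩ else 0) = w ⟨a, ha1⟩
      rw [dif_pos ha1]
    have hvb : s.restrict v ⟨b, hb1, hb2⟩ = w ⟨b, hb1⟩ := by
      show (if h : (b : ℕ) < k then w ⟨b, h⟩ else 0) = w ⟨b, hb1⟩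
      rw [dif_pos hb1]
    rw [hva, hvb, h]
    by_cases hab : a = b
    · subst hab; simp
    · rw [if_neg (by simp [Subtype.ext_iff, Fin.ext_iff]; exact fun h' => hab (Fin.ext h')),
        if_neg (by simp only [Subtype.ext_iff, Fin.ext_iff]; exact fun h' => hab (Fin.ext h'))]
  obtain ⟨b₀, hb₀⟩ := hv.exists_orthonormalBasis_extension_of_card_eq card
  refine ⟨fun i => b₀ i, b₀.orthonormal, ?_⟩
  intro j hPj
  have hmem : (Fin.castLE hk j : Fin N) ∈ s := ⟨j.2, by simpa [Fin.eta] using hPj⟩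
  show b₀ (Fin.castLE hk j) = w j
  rw [hb₀ _ hmem]
  simp [v, j.2]

lemma conj_diag_apply {a k : ℕ} (M : Matrix (Fin a) (Fin k) ℝ) (c : Fin k → ℝ) (i t : Fin a) :
    (M * Matrix.diagonal c * Mᵀ) i t = ∑ l, M i l * c l * M t l := by
  rw [Matrix.mul_apply]
  simp [Matrix.mul_diagonal, Matrix.transpose_apply]

lemma real_inner_eq_dot {M : ℕ} (x y : EuclideanSpace ℝ (Fin M)) :
    (inner ℝ x y : ℝ) = dotProduct (x : Fin M → ℝ) (y : Fin M → ℝ) := by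
  rw [PiLp.inner_apply]
  simp [dotProduct, mul_comm]

lemma forward_dir (r m n : ℕ) (hrn : r ≤ n) (s : Fin r → ℝ)
    (U : Matrix (Fin m) (Fin r) ℝ) (V : Matrix (Fin n) (Fin r) ℝ) (d : Fin r → ℝ)
    (hU : Uᵀ * U = 1) (hV : Vᵀ * V = 1) (hd : ∀ j, |d j| ≤ s j) (j : ℕ) :
    sval (U * Matrix.diagonal d * Vᵀ) j ≤ sval (Matrix.diagonal s) j := by
  classical
  set B := U * Matrix.diagonal d * Vᵀ with hB_def
  -- Gram matrix computation
  have hBt : Bᵀ = V * Matrix.diagonal d * Uᵀ := by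
    rw [hB_def, Matrix.transpose_mul, Matrix.transpose_mul, Matrix.transpose_transpose,
      Matrix.diagonal_transpose, Matrix.mul_assoc]
  have hGram : Bᵀ * B = V * Matrix.diagonal (fun t => d t * d t) * Vᵀ := by
    rw [hBt, hB_def]
    calc V * Matrix.diagonal d * Uᵀ * (U * Matrix.diagonal d * Vᵀ)
        = V * (Matrix.diagonal d * ((Uᵀ * U) * (Matrix.diagonal d * Vᵀ))) := by
          simp only [Matrix.mul_assoc]
      _ = V * (Matrix.diagonal d * Matrix.diagonal d) * Vᵀ := by
          rw [hU, Matrix.one_mul]; simp only [Matrix.mul_assoc]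
      _ = _ := by rw [Matrix.diagonal_mul_diagonal]
  -- orthonormal columns of V, extended to an orthonormal basis
  set vcol : Fin r → EuclideanSpace ℝ (Fin n) := fun t => WithLp.toLp 2 (fun i => V i t) with hvcol_def
  have hVcol : colMat vcol = V := rfl
  have hvorth : Orthonormal ℝ vcol := colMat_orth' vcol (by rw [hVcol]; exact hV)
  obtain ⟨bV, hbV_orth, hbV_eq⟩ := extend_orthonormal'' hrn vcol (fun _ => True)
    (hvorth.comp _ Subtype.val_injective)
  set pad : Fin n → ℝ := padf hrn (fun t => d t * d t) with hpad_def
  have hGram2 : Bᵀ * B = colMat bV * Matrix.diagonal pad * (colMat bV)ᵀ := by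
    rw [hGram]
    ext i t
    rw [conj_diag_apply, conj_diag_apply]
    rw [sum_fin_castLE hrn (fun l => colMat bV i l * pad l * colMat bV t l)
      (fun l hl => show colMat bV i l * padf hrn (fun t => d t * d t) l * colMat bV t l = 0 by
        rw [padf_zero hrn _ l hl]; ring)]
    refine Finset.sum_congr rfl fun x _ => ?_
    have hb : bV (Fin.castLE hrn x) = vcol x := hbV_eq x trivial
    simp only [colMat, Matrix.of_apply, hpad_def, padf_castLE, hb]
    rfl
  -- eigenvalue multisets
  set hB : (Bᵀ * B).IsHermitian := Matrix.isHermitian_conjTranspose_mul_self B with hhB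
  set eigB := hB.eigenvalues with heigB
  have msB : Multiset.map eigB Finset.univ.val = Multiset.map pad Finset.univ.val :=
    eig_multiset hB (colMat bV) pad (colMat_orth bV hbV_orth) hGram2
  have hGramS : (Matrix.diagonal s)ᵀ * Matrix.diagonal s
      = Matrix.diagonal (fun t => s t * s t) := by
    rw [Matrix.diagonal_transpose, Matrix.diagonal_mul_diagonal]
  set hS : ((Matrix.diagonal s)ᵀ * Matrix.diagonal s).IsHermitian :=
    Matrix.isHermitian_conjTranspose_mul_self (Matrix.diagonal s) with hhS
  set eigS := hS.eigenvalues with heigS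
  have msS : Multiset.map eigS Finset.univ.val
      = Multiset.map (fun t => s t * s t) Finset.univ.val := by
    refine eig_multiset hS 1 (fun t => s t * s t) (by simp) ?_
    rw [hGramS]; simp
  -- counting comparisons
  have hdd : ∀ t, d t * d t ≤ s t * s t := by
    intro t
    calc d t * d t = |d t| * |d t| := (abs_mul_abs_self _).symm
      _ ≤ s t * s t := mul_le_mul (hd t) (hd t) (abs_nonneg _) ((abs_nonneg (d t)).trans (hd t))
  have hcnt : ∀ a, 0 < a → cnt eigB a ≤ cnt eigS a := by
    intro a ha
    have h1 : cnt eigB a = Fintype.card {t : Fin r // a ≤ d t * d t} := by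
      rw [cnt, card_subtype_countP eigB (fun x => a ≤ x), msB,
        ← card_subtype_countP pad (fun x => a ≤ x),
        card_padf hrn _ (fun x => a ≤ x) (not_le.mpr ha)]
    have h2 : cnt eigS a = Fintype.card {t : Fin r // a ≤ s t * s t} := by
      rw [cnt, card_subtype_countP eigS (fun x => a ≤ x), msS,
        ← card_subtype_countP (fun t => s t * s t) (fun x => a ≤ x)]
    rw [h1, h2]
    exact Fintype.card_subtype_mono _ _ (fun t ht => ht.trans (hdd t))
  have h0S : ∀ i, 0 ≤ eigS i := by
    intro i
    have hm : eigS i ∈ Multiset.map eigS Finset.univ.val :=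
      Multiset.mem_map_of_mem _ (Finset.mem_univ i)
    rw [msS] at hm
    obtain ⟨t, _, ht⟩ := Multiset.mem_map.mp hm
    rw [← ht]; exact mul_self_nonneg _
  have hposcard : Fintype.card {i // 0 < eigB i} ≤ r := by
    have h1 : Fintype.card {i // 0 < eigB i} = Fintype.card {t : Fin r // 0 < d t * d t} := by
      rw [card_subtype_countP eigB (fun x => 0 < x), msB,
        ← card_subtype_countP pad (fun x => 0 < x),
        card_padf hrn _ (fun x => 0 < x) (lt_irrefl 0)]
    rw [h1]
    simpa using Fintype.card_subtype_le (fun t : Fin r => 0 < d t * d t)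
  -- conclude by cases on j
  by_cases hjn : j < n
  · by_cases hjr : j < r
    · unfold sval
      rw [dif_pos hjn, dif_pos hjr]
      apply Real.sqrt_le_sqrt
      exact dsort_le_dsort eigB eigS ⟨j, hjn⟩ ⟨j, hjr⟩ rfl h0S hcnt
    · unfold sval
      rw [dif_pos hjn, dif_neg hjr]
      have hle : dsort eigB ⟨j, hjn⟩ ≤ 0 :=
        dsort_nonpos eigB ⟨j, hjn⟩ (le_trans hposcard (not_lt.mp hjr))
      exact le_of_eq (Real.sqrt_eq_zero'.mpr hle)
  · unfold sval
    rw [dif_neg hjn, dif_neg (by omega : ¬ j < r)]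

lemma converse_dir (r m n : ℕ) (hrm : r ≤ m) (hrn : r ≤ n) (s : Fin r → ℝ)
    (W : Matrix (Fin m) (Fin n) ℝ) (hrank : W.rank ≤ r)
    (hsv : ∀ j : Fin r, sval W (j : ℕ) ≤ s j) :
    ∃ (U : Matrix (Fin m) (Fin r) ℝ) (V : Matrix (Fin n) (Fin r) ℝ) (d : Fin r → ℝ),
      Uᵀ * U = 1 ∧ Vᵀ * V = 1 ∧ (∀ j, |d j| ≤ s j) ∧
      W = U * Matrix.diagonal d * Vᵀ := by
  classical
  set A := Wᵀ * W with hA_def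
  set hA : A.IsHermitian := Matrix.isHermitian_conjTranspose_mul_self W with hhA
  set μ := hA.eigenvalues with hμ
  -- eigenvalues are nonneg
  have hμ0 : ∀ i, 0 ≤ μ i := by
    intro i
    have hps : (Wᵀ * W).PosSemidef := by
      have := Matrix.posSemidef_conjTranspose_mul_self W
      rwa [Matrix.conjTranspose_eq_transpose_of_trivial] at this
    exact hps.eigenvalues_nonneg i
  -- number of positive eigenvalues is at most r
  have hcard : Fintype.card {i // 0 < μ i} ≤ r := by
    have h1 : Fintype.card {i // 0 < μ i} = Fintype.card {i // μ i ≠ 0} :=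
      Fintype.card_congr (Equiv.subtypeEquivRight fun i =>
        ⟨fun h => ne_of_gt h, fun h => (hμ0 i).lt_of_ne (Ne.symm h)⟩)
    rw [h1, ← hA.rank_eq_card_non_zero_eigs]
    rw [hA_def, Matrix.rank_transpose_mul_self]
    exact hrank
  -- sorted (descending) eigenvalues and eigenvectors
  set σ : Equiv.Perm (Fin n) := Fin.revPerm.trans (Tuple.sort μ) with hσ
  set ν : Fin n → ℝ := fun l => μ (σ l) with hν
  have hν_dsort : ∀ l, ν l = dsort μ l := fun l => rfl
  have hν0 : ∀ l, 0 ≤ ν l := fun l => hμ0 _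
  have hν_zero : ∀ l : Fin n, r ≤ (l : ℕ) → ν l = 0 := by
    intro l hl
    exact le_antisymm (hν_dsort l ▸ dsort_nonpos μ l (le_trans hcard hl)) (hν0 l)
  set qf : Fin n → EuclideanSpace ℝ (Fin n) := fun l => hA.eigenvectorBasis (σ l) with hqf
  have hq_eig : ∀ l, A *ᵥ (qf l : Fin n → ℝ) = ν l • (qf l : Fin n → ℝ) := fun l =>
    hA.mulVec_eigenvectorBasis (σ l)
  have hq_orth : Orthonormal ℝ qf :=
    hA.eigenvectorBasis.orthonormal.comp σ σ.injective
  have hqdot : ∀ l l', dotProduct (qf l) (qf l') = if l = l' then 1 else 0 := by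
    intro l l'
    have h := orthonormal_iff_ite.mp hq_orth l l'
    rw [real_inner_eq_dot] at h
    exact h
  -- key dot product identity
  have hdot : ∀ x y : Fin n → ℝ, dotProduct (W *ᵥ x) (W *ᵥ y) = dotProduct x (A *ᵥ y) := by
    intro x y
    rw [hA_def, ← Matrix.mulVec_mulVec, Matrix.dotProduct_mulVec x, Matrix.vecMul_transpose]
  have hWq : ∀ l l', dotProduct (W *ᵥ qf l) (W *ᵥ qf l')
      = ν l' * (if l = l' then 1 else 0) := by
    intro l l'
    rw [hdot, hq_eig, dotProduct_smul, hqdot, smul_eq_mul]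
  have hWq_zero : ∀ l, ν l = 0 → W *ᵥ qf l = 0 := by
    intro l hl
    have h := hWq l l
    rw [if_pos rfl, hl, zero_mul] at h
    exact dotProduct_self_eq_zero.mp h
  -- singular values
  set d : Fin r → ℝ := fun j => Real.sqrt (ν (Fin.castLE hrn j)) with hd
  have hd_nonneg : ∀ j, 0 ≤ d j := fun j => Real.sqrt_nonneg _
  have hd_sq : ∀ j, d j * d j = ν (Fin.castLE hrn j) := fun j =>
    Real.mul_self_sqrt (hν0 _)
  have hd_sval : ∀ j : Fin r, sval W (j : ℕ) = d j := by
    intro j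
    have hlt : (j : ℕ) < n := lt_of_lt_of_le j.2 hrn
    unfold sval
    rw [dif_pos hlt]
    rfl
  have hd_le : ∀ j, |d j| ≤ s j := by
    intro j
    rw [abs_of_nonneg (hd_nonneg j), ← hd_sval j]
    exact hsv j
  -- the V matrix
  set vf : Fin r → EuclideanSpace ℝ (Fin n) := fun j => qf (Fin.castLE hrn j) with hvf
  have hv_orth : Orthonormal ℝ vf :=
    hq_orth.comp (Fin.castLE hrn) (Fin.castLE_injective hrn)
  -- the candidate U columns
  set uv : Fin r → EuclideanSpace ℝ (Fin m) := fun j => (d j)⁻¹ • WithLp.toLp 2 (W *ᵥ vf j) with huv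
  have huv_orth : Orthonormal ℝ (fun j : {j : Fin r // d j ≠ 0} => uv j.1) := by
    rw [orthonormal_iff_ite]
    rintro ⟨j, hj⟩ ⟨j', hj'⟩
    rw [real_inner_eq_dot]
    have key : dotProduct (uv j : Fin m → ℝ) (uv j' : Fin m → ℝ)
        = (d j)⁻¹ * ((d j')⁻¹ * (ν (Fin.castLE hrn j') * (if j = j' then 1 else 0))) := by
      rw [huv]
      show dotProduct ((d j)⁻¹ • (W *ᵥ vf j)) ((d j')⁻¹ • (W *ᵥ vf j'))
        = _
      rw [smul_dotProduct, dotProduct_smul, smul_eq_mul, smul_eq_mul]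
      congr 1
      congr 1
      rw [hvf]
      show dotProduct (W *ᵥ qf (Fin.castLE hrn j)) (W *ᵥ qf (Fin.castLE hrn j'))
        = ν (Fin.castLE hrn j') * (if j = j' then 1 else 0)
      rw [hWq]
      congr 1
      by_cases hjj : j = j'
      · subst hjj; simp
      · rw [if_neg hjj, if_neg (fun h => hjj (Fin.castLE_injective hrn h))]
    rw [key]
    by_cases hjj : j = j'
    · subst hjj
      rw [if_pos rfl, if_pos rfl, mul_one, ← hd_sq j, ← mul_assoc]
      field_simp
    · rw [if_neg hjj, if_neg (fun h => hjj (congrArg Subtype.val h))]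
      rw [mul_zero, mul_zero, mul_zero]
  obtain ⟨b, hb_orth, hb_eq⟩ := extend_orthonormal'' hrm uv (fun j => d j ≠ 0) huv_orth
  set uf : Fin r → EuclideanSpace ℝ (Fin m) := fun j => b (Fin.castLE hrm j) with huf
  have hu_orth : Orthonormal ℝ uf :=
    hb_orth.comp (Fin.castLE hrm) (Fin.castLE_injective hrm)
  -- W applied to v columns
  have hWv : ∀ j : Fin r, W *ᵥ vf j = d j • uf j := by
    intro j
    by_cases hj : d j = 0
    · have hνj : ν (Fin.castLE hrn j) = 0 := by
        have := hd_sq j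
        rw [hj, mul_zero] at this
        exact this.symm
      rw [hj, zero_smul]
      exact hWq_zero _ hνj
    · have : uf j = uv j := hb_eq j hj
      rw [this, huv]
      show W *ᵥ vf j = d j • ((d j)⁻¹ • (W *ᵥ vf j))
      rw [smul_smul, mul_inv_cancel₀ hj, one_smul]
  refine ⟨colMat uf,
    colMat vf, d,
    colMat_orth _ hu_orth, colMat_orth _ hv_orth, hd_le, ?_⟩
  -- final identity
  have hQQ : colMat qf
      * (colMat qf)ᵀ = 1 :=
    mul_eq_one_comm.mp (colMat_orth _ hq_orth)
  have hW1 : W = W * (colMat qf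
      * (colMat qf)ᵀ) := by
    rw [hQQ, Matrix.mul_one]
  rw [hW1]
  ext i t
  rw [← Matrix.mul_assoc, Matrix.mul_apply]
  have hentry : ∀ l, (W * colMat qf) i l
      = (W *ᵥ qf l) i := by
    intro l
    simp [Matrix.mul_apply, colMat, Matrix.mulVec, dotProduct]
  calc ∑ l, (W * colMat qf) i l
        * (colMat qf)ᵀ l t
      = ∑ l, (W *ᵥ qf l) i * qf l t := by
        refine Finset.sum_congr rfl fun l _ => ?_
        rw [hentry l, Matrix.transpose_apply]
        rfl
    _ = ∑ j : Fin r, (W *ᵥ qf (Fin.castLE hrn j)) i * qf (Fin.castLE hrn j) t := by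
        refine sum_fin_castLE hrn _ fun l hl => ?_
        show (W *ᵥ qf l) i * qf l t = 0
        rw [hWq_zero l (hν_zero l hl)]
        simp
    _ = ∑ j : Fin r, uf j i * d j * vf j t := by
        refine Finset.sum_congr rfl fun j _ => ?_
        have := hWv j
        rw [hvf]
        show (W *ᵥ qf (Fin.castLE hrn j)) i * qf (Fin.castLE hrn j) t = _
        rw [show W *ᵥ qf (Fin.castLE hrn j) = d j • uf j from this]
        show d j * uf j i * qf (Fin.castLE hrn j) t = _
        ring
    _ = (colMat uf * Matrix.diagonal d
        * (colMat vf)ᵀ) i t := by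
        rw [Matrix.mul_apply]
        refine Finset.sum_congr rfl fun j _ => ?_
        rw [Matrix.mul_diagonal, Matrix.transpose_apply]
        rfl

end NBLoRAHelpers

/-- Completeness of NB-LoRA I: (forward) if `U, V` have orthonormal columns and
`D = diag d̂` with `|d̂ⱼ| ≤ sⱼ`, then `σⱼ(U D Vᵀ) ≤ σⱼ(diag s)` for all `j`;
(converse) every `W` with `rank W ≤ r` and `σⱼ(W) ≤ sⱼ` (for decreasing positive `s`)
can be written as `W = U D Vᵀ` with `U, V` orthonormal-column and `|Dⱼⱼ| ≤ sⱼ`. -/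
theorem stmt_11 (r m n : ℕ) (hrm : r ≤ m) (hrn : r ≤ n)
    (s : Fin r → ℝ) (hs : ∀ j, 0 < s j) (hdec : ∀ i j : Fin r, i ≤ j → s j ≤ s i) :
    (∀ (U : Matrix (Fin m) (Fin r) ℝ) (V : Matrix (Fin n) (Fin r) ℝ) (d : Fin r → ℝ),
      Uᵀ * U = 1 → Vᵀ * V = 1 → (∀ j, |d j| ≤ s j) →
      ∀ j : ℕ, sval (U * Matrix.diagonal d * Vᵀ) j ≤ sval (Matrix.diagonal s) j) ∧
    (∀ W : Matrix (Fin m) (Fin n) ℝ, W.rank ≤ r → (∀ j : Fin r, sval W (j : ℕ) ≤ s j) →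
      ∃ (U : Matrix (Fin m) (Fin r) ℝ) (V : Matrix (Fin n) (Fin r) ℝ) (d : Fin r → ℝ),
        Uᵀ * U = 1 ∧ Vᵀ * V = 1 ∧ (∀ j, |d j| ≤ s j) ∧
        W = U * Matrix.diagonal d * Vᵀ) := by
  constructor
  · intro U V d hU hV hd j
    exact forward_dir r m n hrn s U V d hU hV hd j
  · intro W h1 h2
    exact converse_dir r m n hrm hrn s W h1 h2
end

section
/- Jacobian bound for the nonlinear NB-LoRA I layer: let f(x) = U D₁ φ(D₂ Vᵀ x) where U ∈ ℝ^{m×r}, V ∈ ℝ^{n×r} have orthonormal columns, D₁, D₂ are r×r diagonal matrices with |D₁ D₂| ⪯ S = diag(s) entrywise, and φ is a differentiable scalar activation applied entrywise with derivative in [0,1]. Then for every x, the Jacobian ∂f/∂x has rank at most r and σ_j(∂f/∂x) ≤ σ_j(S) for all j. -/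
open Matrix

section helpers
open Polynomial Finset

lemma eval_charpoly' {N : ℕ} (M : Matrix (Fin N) (Fin N) ℝ) (t : ℝ) :
    (M.charpoly).eval t = (t • (1 : Matrix (Fin N) (Fin N) ℝ) - M).det := by
  have : (Polynomial.evalRingHom t) (M.charpoly) =
      ((charmatrix M).map (Polynomial.evalRingHom t)).det := by
    rw [Matrix.charpoly, RingHom.map_det]; rfl
  simp only [coe_evalRingHom] at this
  rw [this]
  congr 1
  ext i j
  by_cases h : i = j <;>
  simp [charmatrix_apply, h, Matrix.one_apply, Matrix.smul_apply, diagonal_apply]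

lemma charpoly_eq_of_eval {N : ℕ} (M : Matrix (Fin N) (Fin N) ℝ) (q : ℝ[X])
    (h : ∀ t : ℝ, t ≠ 0 → (t • (1 : Matrix (Fin N) (Fin N) ℝ) - M).det = q.eval t) :
    M.charpoly = q := by
  have hz : M.charpoly - q = 0 := by
    apply Polynomial.eq_zero_of_infinite_isRoot
    apply Set.Infinite.mono (s := {x : ℝ | x ≠ 0})
    · intro t ht
      simp only [Set.mem_setOf_eq, IsRoot, eval_sub, sub_eq_zero] at *
      rw [eval_charpoly', h t ht]
    · have : ({x : ℝ | x ≠ 0}) = ({0} : Set ℝ)ᶜ := by ext; simp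
      rw [this]
      exact Set.Finite.infinite_compl (Set.finite_singleton 0)
  exact sub_eq_zero.mp hz

lemma charpoly_conj_diag {n r : ℕ} (hrn : r ≤ n) (V : Matrix (Fin n) (Fin r) ℝ)
    (hV : Vᵀ * V = 1) (e : Fin r → ℝ) :
    (V * Matrix.diagonal e * Vᵀ).charpoly = X ^ (n - r) * ∏ i, (X - C (e i)) := by
  apply charpoly_eq_of_eval
  intro t ht
  have key : t • (1 : Matrix (Fin n) (Fin n) ℝ) - V * Matrix.diagonal e * Vᵀ =
      t • (1 + (V * ((-t⁻¹) • Matrix.diagonal e)) * Vᵀ) := by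
    rw [smul_add, sub_eq_add_neg]
    congr 1
    rw [Matrix.mul_smul, Matrix.smul_mul, smul_smul]
    field_simp
    rw [neg_one_smul]
  rw [key, Matrix.det_smul, Matrix.det_one_add_mul_comm]
  have : Vᵀ * (V * ((-t⁻¹) • Matrix.diagonal e)) = (-t⁻¹) • Matrix.diagonal e := by
    rw [← Matrix.mul_assoc, hV, Matrix.one_mul]
  rw [this]
  have : (1 : Matrix (Fin r) (Fin r) ℝ) + (-t⁻¹) • Matrix.diagonal e =
      Matrix.diagonal (fun i => 1 + (-t⁻¹) * e i) := by
    rw [← Matrix.diagonal_one, ← Matrix.diagonal_smul, Matrix.diagonal_add]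
    rfl
  rw [this, Matrix.det_diagonal]
  simp only [eval_mul, eval_pow, eval_X, eval_prod, eval_sub, eval_C]
  rw [Fintype.card_fin]
  have : t ^ n = t ^ (n - r) * t ^ r := by rw [← pow_add]; congr 1; omega
  rw [this, mul_assoc]
  congr 1
  rw [← Fin.prod_const r t, ← Finset.prod_mul_distrib]
  apply Finset.prod_congr rfl
  intro i _
  field_simp
  ring

lemma charpoly_hermitian {N : ℕ} (A : Matrix (Fin N) (Fin N) ℝ) (hA : A.IsHermitian) :
    A.charpoly = ∏ i, (X - C (hA.eigenvalues i)) := by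
  apply charpoly_eq_of_eval
  intro t ht
  set U : Matrix (Fin N) (Fin N) ℝ := (hA.eigenvectorUnitary : Matrix (Fin N) (Fin N) ℝ) with hU
  have h1 : U * star U = 1 := Unitary.mul_star_self_of_mem hA.eigenvectorUnitary.2
  have h2 : star U * U = 1 := Unitary.star_mul_self_of_mem hA.eigenvectorUnitary.2
  have hdiag : Matrix.diagonal (RCLike.ofReal ∘ hA.eigenvalues) =
      Matrix.diagonal hA.eigenvalues := by
    congr 1
  have hspec : A = U * Matrix.diagonal hA.eigenvalues * star U := by
    conv_lhs => rw [hA.spectral_theorem]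
    rw [hdiag]
    rw [Unitary.conjStarAlgAut_apply]
  have key : t • (1 : Matrix (Fin N) (Fin N) ℝ) - A =
      U * (t • 1 - Matrix.diagonal hA.eigenvalues) * star U := by
    rw [Matrix.mul_sub, Matrix.sub_mul, ← hspec, Matrix.mul_smul, Matrix.mul_one,
      Matrix.smul_mul, h1]
  rw [key, Matrix.det_mul, Matrix.det_mul]
  have hdet : U.det * (star U).det = 1 := by rw [← Matrix.det_mul, h1, Matrix.det_one]
  have : (t • (1 : Matrix (Fin N) (Fin N) ℝ) - Matrix.diagonal hA.eigenvalues) =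
      Matrix.diagonal (fun i => t - hA.eigenvalues i) := by
    ext i j
    by_cases h : i = j <;>
      simp [Matrix.sub_apply, Matrix.smul_apply, Matrix.one_apply, Matrix.diagonal_apply, h]
  rw [this, Matrix.det_diagonal]
  simp only [eval_prod, eval_sub, eval_X, eval_C]
  rw [mul_comm (U.det), mul_assoc, hdet, mul_one]

lemma eig_multiset_s17 {N : ℕ} (A : Matrix (Fin N) (Fin N) ℝ) (hA : A.IsHermitian) :
    Finset.univ.val.map hA.eigenvalues = A.charpoly.roots := by
  rw [charpoly_hermitian A hA]
  rw [← Polynomial.roots_multiset_prod_X_sub_C (Finset.univ.val.map hA.eigenvalues)]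
  congr 1
  rw [Multiset.map_map]
  rfl

lemma roots_prod_X_sub_C' {ι : Type*} [Fintype ι] (e : ι → ℝ) :
    (∏ i, (X - C (e i))).roots = Finset.univ.val.map e := by
  rw [← Polynomial.roots_multiset_prod_X_sub_C (Finset.univ.val.map e)]
  congr 1
  rw [Multiset.map_map]
  rfl

lemma count_ge_of_monotone {N : ℕ} (g : Fin N → ℝ) (hg : Monotone g) (j : Fin N) (t : ℝ)
    (h : t < g (Fin.rev j)) :
    (j : ℕ) + 1 ≤ (Finset.univ.filter fun i => t < g i).card := by
  have h1 : Finset.Ici (Fin.rev j) ⊆ Finset.univ.filter fun i => t < g i := by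
    intro i hi
    rw [Finset.mem_Ici] at hi
    rw [Finset.mem_filter]
    exact ⟨Finset.mem_univ _, lt_of_lt_of_le h (hg hi)⟩
  have h2 := Finset.card_le_card h1
  rw [Fin.card_Ici] at h2
  have := j.isLt
  have := Fin.val_rev j
  omega

lemma count_le_of_monotone {N : ℕ} (g : Fin N → ℝ) (hg : Monotone g) (j : Fin N) :
    (Finset.univ.filter fun i => g (Fin.rev j) < g i).card ≤ (j : ℕ) := by
  have h1 : (Finset.univ.filter fun i => g (Fin.rev j) < g i) ⊆ Finset.Ioi (Fin.rev j) := by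
    intro i hi
    rw [Finset.mem_filter] at hi
    rw [Finset.mem_Ioi]
    by_contra hle
    exact absurd (hg (not_lt.mp hle)) (not_le.mpr hi.2)
  have h2 := Finset.card_le_card h1
  rw [Fin.card_Ioi] at h2
  have := j.isLt
  have := Fin.val_rev j
  omega

lemma card_filter_perm {N : ℕ} (p : ℝ → Prop) [DecidablePred p] (f : Fin N → ℝ)
    (σ : Equiv.Perm (Fin N)) :
    (Finset.univ.filter fun i => p (f (σ i))).card = (Finset.univ.filter fun i => p (f i)).card := by
  apply Finset.card_bij (fun i _ => σ i)
  · intro i hi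
    rw [Finset.mem_filter] at *
    exact ⟨Finset.mem_univ _, hi.2⟩
  · intro i _ i' _ h
    exact σ.injective h
  · intro i hi
    refine ⟨σ.symm i, ?_, by simp⟩
    rw [Finset.mem_filter] at *
    simpa using hi.2

lemma sorted_compare {N R : ℕ} (a : Fin N → ℝ) (b : Fin R → ℝ)
    (hcount : ∀ t : ℝ, 0 ≤ t →
      (Finset.univ.filter fun i => t < a i).card ≤ (Finset.univ.filter fun i => t < b i).card)
    (j : ℕ) :
    (if h : j < N then Real.sqrt (a (Tuple.sort a (Fin.rev ⟨j, h⟩))) else 0) ≤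
    (if h : j < R then Real.sqrt (b (Tuple.sort b (Fin.rev ⟨j, h⟩))) else 0) := by
  have hrhs : 0 ≤ (if h : j < R then Real.sqrt (b (Tuple.sort b (Fin.rev ⟨j, h⟩))) else 0) := by
    split
    · exact Real.sqrt_nonneg _
    · exact le_rfl
  by_cases hjN : j < N
  · rw [dif_pos hjN]
    set ga : Fin N → ℝ := a ∘ Tuple.sort a with hga
    have hmga : Monotone ga := Tuple.monotone_sort a
    have hcga : ∀ t : ℝ, (Finset.univ.filter fun i => t < ga i).card
        = (Finset.univ.filter fun i => t < a i).card := fun t =>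
      card_filter_perm (fun x => t < x) a (Tuple.sort a)
    have hea : a (Tuple.sort a (Fin.rev ⟨j, hjN⟩)) = ga (Fin.rev ⟨j, hjN⟩) := rfl
    rw [hea]
    by_cases hpos : 0 < ga (Fin.rev ⟨j, hjN⟩)
    · by_cases hjR : j < R
      · rw [dif_pos hjR]
        set gb : Fin R → ℝ := b ∘ Tuple.sort b with hgb
        have hmgb : Monotone gb := Tuple.monotone_sort b
        have hcgb : ∀ t : ℝ, (Finset.univ.filter fun i => t < gb i).card
            = (Finset.univ.filter fun i => t < b i).card := fun t =>
          card_filter_perm (fun x => t < x) b (Tuple.sort b)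
        have heb : b (Tuple.sort b (Fin.rev ⟨j, hjR⟩)) = gb (Fin.rev ⟨j, hjR⟩) := rfl
        rw [heb]
        apply Real.sqrt_le_sqrt
        by_contra hlt
        push_neg at hlt
        set t : ℝ := max (gb (Fin.rev ⟨j, hjR⟩)) 0 with ht
        have h0t : 0 ≤ t := le_max_right _ _
        have hta : t < ga (Fin.rev ⟨j, hjN⟩) := max_lt hlt hpos
        have h1 : (j : ℕ) + 1 ≤ (Finset.univ.filter fun i => t < ga i).card :=
          count_ge_of_monotone ga hmga ⟨j, hjN⟩ t hta
        have h2 : (Finset.univ.filter fun i => t < gb i).card ≤ (j : ℕ) := by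
          refine le_trans (Finset.card_le_card ?_)
            (count_le_of_monotone gb hmgb ⟨j, hjR⟩)
          intro i hi
          rw [Finset.mem_filter] at *
          exact ⟨hi.1, lt_of_le_of_lt (le_max_left _ _) hi.2⟩
        have := hcount t h0t
        rw [← hcga t, ← hcgb t] at this
        omega
      · exfalso
        have h1 : (j : ℕ) + 1 ≤ (Finset.univ.filter fun i => (0:ℝ) < ga i).card :=
          count_ge_of_monotone ga hmga ⟨j, hjN⟩ 0 hpos
        have h2 : (Finset.univ.filter fun i => (0:ℝ) < b i).card ≤ R :=
          le_trans (Finset.card_le_card (Finset.filter_subset _ _)) (by simp)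
        have := hcount 0 le_rfl
        rw [← hcga 0] at this
        omega
    · have : Real.sqrt (ga (Fin.rev ⟨j, hjN⟩)) = 0 :=
        Real.sqrt_eq_zero'.mpr (not_lt.mp hpos)
      rw [this]
      exact hrhs
  · rw [dif_neg hjN]
    exact hrhs

lemma card_filter_eq_countP {N : ℕ} (f : Fin N → ℝ) (t : ℝ) :
    (Finset.univ.filter fun i => t < f i).card
      = Multiset.countP (fun x => t < x) (Finset.univ.val.map f) := by
  rw [Multiset.countP_map]
  rfl

lemma r_le_n {n r : ℕ} (V : Matrix (Fin n) (Fin r) ℝ) (hV : Vᵀ * V = 1) : r ≤ n := by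
  have h1 : (Vᵀ * V).rank = r := by rw [hV]; simp [Matrix.rank_one]
  have h2 : (Vᵀ * V).rank ≤ n := le_trans (Matrix.rank_mul_le_right _ _)
    (le_trans (Matrix.rank_le_card_height _) (by simp))
  omega


end helpers

/-- Jacobian bound for the nonlinear NB-LoRA I layer `f(x) = U D₁ φ(D₂ Vᵀ x)`: if
`U, V` have orthonormal columns, `|D₁ D₂| ⪯ diag s` entrywise, and `φ` has derivative
`φ'` with values in `[0, 1]`, then the Jacobian
`∂f/∂x = U D₁ diag(φ'(D₂ Vᵀ x)) D₂ Vᵀ` has rank at most `r` and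
`σⱼ(∂f/∂x) ≤ σⱼ(diag s)` for all `j`, at every `x`. -/
theorem stmt_17 (r m n : ℕ)
    (U : Matrix (Fin m) (Fin r) ℝ) (V : Matrix (Fin n) (Fin r) ℝ)
    (hU : Uᵀ * U = 1) (hV : Vᵀ * V = 1)
    (d₁ d₂ s : Fin r → ℝ) (hs : ∀ j, 0 < s j)
    (hD : ∀ j, |d₁ j * d₂ j| ≤ s j)
    (φ : ℝ → ℝ) (φ' : ℝ → ℝ)
    (hφ : ∀ t, HasDerivAt φ (φ' t) t) (hslope : ∀ t, φ' t ∈ Set.Icc (0 : ℝ) 1)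
    (x : Fin n → ℝ) :
    (U * Matrix.diagonal d₁ *
        Matrix.diagonal (fun j => φ' (((Matrix.diagonal d₂ * Vᵀ).mulVec x) j)) *
        Matrix.diagonal d₂ * Vᵀ).rank ≤ r ∧
    ∀ j : ℕ,
      sval (U * Matrix.diagonal d₁ *
        Matrix.diagonal (fun j => φ' (((Matrix.diagonal d₂ * Vᵀ).mulVec x) j)) *
        Matrix.diagonal d₂ * Vᵀ) j ≤ sval (Matrix.diagonal s) j := by
  have hrn : r ≤ n := r_le_n V hV
  set Φ : Fin r → ℝ := fun j => φ' (((Matrix.diagonal d₂ * Vᵀ).mulVec x) j) with hΦ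
  set c : Fin r → ℝ := fun j => d₁ j * Φ j * d₂ j with hc
  set J : Matrix (Fin m) (Fin n) ℝ :=
    U * Matrix.diagonal d₁ * Matrix.diagonal Φ * Matrix.diagonal d₂ * Vᵀ with hJ
  have hJc : J = U * Matrix.diagonal c * Vᵀ := by
    rw [hJ]
    congr 1
    rw [Matrix.mul_assoc, Matrix.mul_assoc, ← Matrix.mul_assoc (Matrix.diagonal d₁),
      Matrix.diagonal_mul_diagonal, Matrix.diagonal_mul_diagonal]
  have hcc : (fun i => c i * c i) = fun i => c i ^ 2 := by
    funext i; exact (sq (c i)).symm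
  have hUU : ∀ (X : Matrix (Fin r) (Fin n) ℝ), Uᵀ * (U * X) = X := by
    intro X; rw [← Matrix.mul_assoc, hU, Matrix.one_mul]
  have hT : Jᴴ * J = V * Matrix.diagonal (fun i => c i ^ 2) * Vᵀ := by
    rw [Matrix.conjTranspose_eq_transpose_of_trivial, hJc]
    simp only [Matrix.transpose_mul, Matrix.transpose_transpose, Matrix.diagonal_transpose,
      Matrix.mul_assoc]
    rw [hUU, ← Matrix.mul_assoc (Matrix.diagonal c), Matrix.diagonal_mul_diagonal, hcc]
  have hMA : Finset.univ.val.map (Matrix.isHermitian_conjTranspose_mul_self J).eigenvalues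
      = Multiset.replicate (n - r) 0 + Finset.univ.val.map (fun i => c i ^ 2) := by
    rw [eig_multiset_s17 _ (Matrix.isHermitian_conjTranspose_mul_self J), hT,
      charpoly_conj_diag hrn V hV (fun i => c i ^ 2)]
    rw [Polynomial.roots_mul, Polynomial.roots_pow, Polynomial.roots_X,
      roots_prod_X_sub_C', Multiset.nsmul_singleton]
    exact mul_ne_zero (pow_ne_zero _ Polynomial.X_ne_zero)
      (Polynomial.monic_prod_of_monic _ _ fun i _ => Polynomial.monic_X_sub_C _).ne_zero
  have hss : (fun i => s i * s i) = fun i => s i ^ 2 := by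
    funext i; exact (sq (s i)).symm
  have hSS : (Matrix.diagonal s)ᴴ * Matrix.diagonal s
      = (1 : Matrix (Fin r) (Fin r) ℝ) * Matrix.diagonal (fun i => s i ^ 2)
        * (1 : Matrix (Fin r) (Fin r) ℝ)ᵀ := by
    rw [Matrix.conjTranspose_eq_transpose_of_trivial, Matrix.diagonal_transpose,
      Matrix.diagonal_mul_diagonal, Matrix.transpose_one, Matrix.mul_one, Matrix.one_mul, hss]
  have hMB : Finset.univ.val.map
        (Matrix.isHermitian_conjTranspose_mul_self (Matrix.diagonal s)).eigenvalues
      = Finset.univ.val.map (fun i => s i ^ 2) := by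
    rw [eig_multiset_s17 _ (Matrix.isHermitian_conjTranspose_mul_self (Matrix.diagonal s)), hSS,
      charpoly_conj_diag le_rfl 1 (by rw [Matrix.transpose_one, Matrix.one_mul]),
      Nat.sub_self, pow_zero, one_mul, roots_prod_X_sub_C']
  have hcs : ∀ i, c i ^ 2 ≤ s i ^ 2 := by
    intro i
    have h1 := hD i
    have h2 := (hslope (((Matrix.diagonal d₂ * Vᵀ).mulVec x) i)).1
    have h3 := (hslope (((Matrix.diagonal d₂ * Vᵀ).mulVec x) i)).2
    have hci : c i = d₁ i * d₂ i * Φ i := by rw [hc]; ring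
    have habs : |d₁ i * d₂ i| ^ 2 ≤ s i ^ 2 := by
      have := abs_nonneg (d₁ i * d₂ i)
      nlinarith
    rw [sq_abs] at habs
    have hgoal : c i ^ 2 = (d₁ i * d₂ i) ^ 2
        * φ' (((Matrix.diagonal d₂ * Vᵀ).mulVec x) i) ^ 2 := by
      rw [hci, hΦ]; ring
    rw [hgoal]
    have hy2 : φ' (((Matrix.diagonal d₂ * Vᵀ).mulVec x) i) ^ 2 ≤ 1 := by nlinarith
    calc (d₁ i * d₂ i) ^ 2 * φ' (((Matrix.diagonal d₂ * Vᵀ).mulVec x) i) ^ 2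
        ≤ (d₁ i * d₂ i) ^ 2 * 1 := mul_le_mul_of_nonneg_left hy2 (sq_nonneg _)
      _ = (d₁ i * d₂ i) ^ 2 := mul_one _
      _ ≤ s i ^ 2 := habs
  have hcount : ∀ t : ℝ, 0 ≤ t →
      (Finset.univ.filter fun i => t <
        (Matrix.isHermitian_conjTranspose_mul_self J).eigenvalues i).card ≤
      (Finset.univ.filter fun i => t <
        (Matrix.isHermitian_conjTranspose_mul_self (Matrix.diagonal s)).eigenvalues i).card := by
    intro t h0t
    rw [card_filter_eq_countP, card_filter_eq_countP, hMA, hMB, Multiset.countP_add]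
    have hz : Multiset.countP (fun x => t < x) (Multiset.replicate (n - r) 0) = 0 := by
      apply Multiset.countP_eq_zero.mpr
      intro a ha
      rw [Multiset.eq_of_mem_replicate ha]
      exact not_lt.mpr h0t
    rw [hz, zero_add, ← card_filter_eq_countP, ← card_filter_eq_countP]
    apply Finset.card_le_card
    intro i hi
    rw [Finset.mem_filter] at *
    exact ⟨hi.1, lt_of_lt_of_le hi.2 (hcs i)⟩
  constructor
  · exact le_trans (Matrix.rank_mul_le_right _ _)
      (le_trans (Matrix.rank_le_card_height _) (by simp))
  · intro j
    have := sorted_compare (Matrix.isHermitian_conjTranspose_mul_self J).eigenvalues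
      (Matrix.isHermitian_conjTranspose_mul_self (Matrix.diagonal s)).eigenvalues hcount j
    unfold sval
    exact this
end

section
/- Sherman–Morrison style induction: let Q ∈ ℝ^{n×n} with columns q_1,...,q_n and let e_k be standard basis vectors. Define A_1 = I and A_{k+1} = A_k + s_k e_k q_kᵀ where s_k = sgn(q_kᵀ A_k^{-1} e_k) with sgn(0)=1 (assuming inductively A_k is invertible). Then each A_{k+1} is invertible since 1 + s_k q_kᵀ A_k^{-1} e_k > 0, and A_{n+1} = I + P Qᵀ for P = diag(s_1,...,s_n). -/
open Matrix

/-- Sherman–Morrison style induction: starting from `A 0 = I` and updating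
`A (k+1) = A k + sₖ • eₖ qₖᵀ` with `sₖ = sgn(qₖᵀ (A k)⁻¹ eₖ)` (and `sgn 0 = 1`),
every `A k` is invertible, `1 + sₖ qₖᵀ (A k)⁻¹ eₖ > 0` at each step, and the final
matrix is `A n = I + P Qᵀ` with `P = diag(s)`. -/
theorem stmt_18 (n : ℕ) (Q : Matrix (Fin n) (Fin n) ℝ)
    (A : ℕ → Matrix (Fin n) (Fin n) ℝ) (s : Fin n → ℝ)
    (hA0 : A 0 = 1)
    (hsgn : ∀ k : Fin n, s k = if 0 ≤ (Qᵀ * (A (k : ℕ))⁻¹) k k then 1 else -1)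
    (hrec : ∀ k : Fin n,
      A ((k : ℕ) + 1) = A (k : ℕ) + s k • Matrix.vecMulVec (Pi.single k 1) (Qᵀ k)) :
    (∀ k : ℕ, k ≤ n → IsUnit (A k)) ∧
    (∀ k : Fin n, 0 < 1 + s k * ((Qᵀ * (A (k : ℕ))⁻¹) k k)) ∧
    A n = 1 + Matrix.diagonal s * Qᵀ := by
  have key : ∀ k : Fin n, s k * ((Qᵀ * (A (k : ℕ))⁻¹) k k)
      = |(Qᵀ * (A (k : ℕ))⁻¹) k k| := by
    intro k
    rw [hsgn k]
    split_ifs with h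
    · rw [one_mul, abs_of_nonneg h]
    · rw [neg_one_mul, abs_of_neg (lt_of_not_ge h)]
  have pos : ∀ k : Fin n, 0 < 1 + s k * ((Qᵀ * (A (k : ℕ))⁻¹) k k) := by
    intro k; rw [key k]; positivity
  -- entry rewrite: s k • vecMulVec (single k 1) (Qᵀ k) = col * row
  have hcr : ∀ k : Fin n, s k • Matrix.vecMulVec (Pi.single k 1) (Qᵀ k)
      = replicateCol Unit (s k • (Pi.single k 1 : Fin n → ℝ)) * replicateRow Unit (Qᵀ k) := by
    intro k
    rw [← vecMulVec_eq]
    ext i j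
    simp [vecMulVec_apply, Pi.single_apply, mul_assoc]
  have hdet : ∀ k : Fin n, IsUnit (A (k : ℕ)).det →
      (A ((k : ℕ) + 1)).det
        = (A (k : ℕ)).det * (1 + s k * ((Qᵀ * (A (k : ℕ))⁻¹) k k)) := by
    intro k hk
    rw [hrec k, hcr k, det_add_replicateCol_mul_replicateRow hk]
    congr 1
    rw [det_unique]
    simp only [Matrix.add_apply, Matrix.one_apply_eq, Matrix.mul_apply,
      Matrix.replicateRow_apply, Matrix.replicateCol_apply, Pi.smul_apply, Pi.single_apply,
      smul_eq_mul, mul_ite, mul_one, mul_zero, Finset.sum_ite_eq',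
      Finset.mem_univ, if_true]
    ring_nf
  have hunit : ∀ k : ℕ, k ≤ n → IsUnit (A k) := by
    intro k
    induction k with
    | zero => intro _; rw [hA0]; exact isUnit_one
    | succ m ih =>
      intro hm
      have hmn : m < n := hm
      have hu : IsUnit (A m) := ih (le_of_lt hmn)
      have hud : IsUnit (A m).det := (isUnit_iff_isUnit_det _).mp hu
      rw [isUnit_iff_isUnit_det]
      have := hdet ⟨m, hmn⟩ (by simpa using hud)
      simp only [Fin.val_mk] at this
      rw [this, isUnit_iff_ne_zero]
      exact mul_ne_zero (isUnit_iff_ne_zero.mp hud) (ne_of_gt (pos ⟨m, hmn⟩))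
  refine ⟨hunit, pos, ?_⟩
  have entry : ∀ m : ℕ, m ≤ n → ∀ i j : Fin n,
      A m i j = (1 : Matrix (Fin n) (Fin n) ℝ) i j
        + (if (i : ℕ) < m then s i * Qᵀ i j else 0) := by
    intro m
    induction m with
    | zero => intro _ i j; simp [hA0]
    | succ m ih =>
      intro hm i j
      have hmn : m < n := hm
      have := hrec ⟨m, hmn⟩
      simp only [Fin.val_mk] at this
      rw [this]
      simp only [Matrix.add_apply, Matrix.smul_apply, vecMulVec_apply,
        Pi.single_apply, smul_eq_mul]
      rw [ih (le_of_lt hmn) i j]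
      by_cases hi : (i : ℕ) < m
      · have hne : i ≠ (⟨m, hmn⟩ : Fin n) := by
          intro h; rw [h] at hi; exact absurd hi (lt_irrefl m)
        simp [hi, Nat.lt_succ_of_lt hi, hne]
      · by_cases he : i = (⟨m, hmn⟩ : Fin n)
        · subst he
          simp [hi, Nat.lt_succ_self, mul_comm]
        · have : ¬ (i : ℕ) < m + 1 := by
            intro h
            rcases Nat.lt_succ_iff_lt_or_eq.mp h with h' | h'
            · exact hi h'
            · exact he (Fin.ext h')
          simp [hi, this, he]
  ext i j
  rw [entry n le_rfl i j]
  simp [Matrix.add_apply, Matrix.diagonal_mul, i.isLt]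
end
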